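/- arXiv:0808.3276 — 6 statements merged into one kernel-verified Lean document; each statement's English description precedes it below -/
import Mathlib

section
/- With the metafluid parameters replaced by κ = (a/b)κ₀, ρ₁ = (b/a)ρ₀, ρ₂ = (a/b)ρ₀, for every incidence angle θ₀ ∈ (-π/2, π/2) there exists θ such that the Snell–Descartes law v⁻¹ sin θ = c₀⁻¹ sin θ₀, the matched-impedance condition ρ₁ v / cos θ = ρ₀ c₀ / cos θ₀, and the equal-travel-time condition a·v/(c₁² cos θ) = b/(c₀ cos θ₀) all hold simultaneously, where c₀ = √(κ₀/ρ₀), c_j = √(κ/ρ_j) for j = 1,2, and v² = c₁² cos²θ + c₂² sin²θ. -/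
open Real

/-- 2D acoustic mirage with anisotropic inertia: with κ = (a/b)κ₀, ρ₁ = (b/a)ρ₀,
ρ₂ = (a/b)ρ₀, for every incidence angle θ₀ ∈ (-π/2, π/2) there is a refraction
angle θ (and phase speed v) satisfying Snell-Descartes' law, matched impedance
and equal travel time. -/
theorem stmt_1 (ρ₀ κ₀ a b : ℝ) (hρ₀ : 0 < ρ₀) (hκ₀ : 0 < κ₀) (ha : 0 < a) (hab : a < b)
    (c₀ c₁ c₂ κ ρ₁ ρ₂ : ℝ)
    (hκ : κ = (a / b) * κ₀) (hρ₁ : ρ₁ = (b / a) * ρ₀) (hρ₂ : ρ₂ = (a / b) * ρ₀)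
    (hc₀ : c₀ = Real.sqrt (κ₀ / ρ₀)) (hc₁ : c₁ = Real.sqrt (κ / ρ₁))
    (hc₂ : c₂ = Real.sqrt (κ / ρ₂))
    (θ₀ : ℝ) (hθ₀ : θ₀ ∈ Set.Ioo (-(π / 2)) (π / 2)) :
    ∃ θ v : ℝ, 0 < v ∧
      v ^ 2 = c₁ ^ 2 * Real.cos θ ^ 2 + c₂ ^ 2 * Real.sin θ ^ 2 ∧
      Real.sin θ / v = Real.sin θ₀ / c₀ ∧
      ρ₁ * v / Real.cos θ = ρ₀ * c₀ / Real.cos θ₀ ∧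
      a * v / (c₁ ^ 2 * Real.cos θ) = b / (c₀ * Real.cos θ₀) := by
  obtain ⟨h1, h2⟩ := hθ₀
  have hb : 0 < b := ha.trans hab
  have hcos0 : 0 < Real.cos θ₀ := Real.cos_pos_of_mem_Ioo ⟨h1, h2⟩
  have htpos : 0 < a / b := div_pos ha hb
  set θ := Real.arctan (a / b * Real.tan θ₀) with hθ
  have hcosθ : 0 < Real.cos θ :=
    Real.cos_pos_of_mem_Ioo ⟨Real.neg_pi_div_two_lt_arctan _, Real.arctan_lt_pi_div_two _⟩
  have hsinθ : Real.sin θ = a / b * (Real.sin θ₀ / Real.cos θ₀) * Real.cos θ := by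
    have ht : Real.tan θ = a / b * (Real.sin θ₀ / Real.cos θ₀) := by
      rw [hθ, Real.tan_arctan, Real.tan_eq_sin_div_cos]
    have h := (Real.tan_eq_sin_div_cos θ).symm.trans ht
    rw [div_eq_iff hcosθ.ne'] at h
    linarith [h]
  clear_value θ
  clear hθ
  have hc0pos : 0 < c₀ := by
    rw [hc₀]; exact Real.sqrt_pos.2 (div_pos hκ₀ hρ₀)
  have hc0sq : c₀ ^ 2 = κ₀ / ρ₀ := by
    rw [hc₀, sq_sqrt (le_of_lt (div_pos hκ₀ hρ₀))]
  have hc1sq : c₁ ^ 2 = (a / b) ^ 2 * c₀ ^ 2 := by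
    have h : κ / ρ₁ = (a / b) ^ 2 * (κ₀ / ρ₀) := by
      rw [hκ, hρ₁]; field_simp
    rw [hc₁, sq_sqrt (by rw [h]; positivity : (0:ℝ) ≤ κ / ρ₁), h, hc0sq]
  have hc2sq : c₂ ^ 2 = c₀ ^ 2 := by
    have h : κ / ρ₂ = κ₀ / ρ₀ := by
      rw [hκ, hρ₂]; field_simp
    rw [hc₂, sq_sqrt (by rw [h]; positivity : (0:ℝ) ≤ κ / ρ₂), h, hc0sq]
  have hpyth : Real.sin θ₀ ^ 2 + Real.cos θ₀ ^ 2 = 1 := Real.sin_sq_add_cos_sq θ₀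
  refine ⟨θ, a / b * c₀ * Real.cos θ / Real.cos θ₀, by positivity, ?_, ?_, ?_, ?_⟩
  · rw [hc1sq, hc2sq, hsinθ]
    field_simp
    linear_combination (-1 : ℝ) * hpyth
  · rw [hsinθ]
    field_simp
  · rw [hρ₁]
    rw [div_eq_div_iff hcosθ.ne' hcos0.ne']
    field_simp
  · rw [hc1sq]
    rw [div_eq_div_iff (by positivity) (by positivity)]
    field_simp
end

section
/- Let χ : ℝⁿ → ℝⁿ be a C² diffeomorphism with deformation gradient F, Λ = det F > 0, V² = F Fᵗ, and let Q be any symmetric invertible C¹ matrix field on the deformed domain satisfying div_x Q = 0. Then for any C² scalar field p, ∇_X² p = Λ · Q : ∇_x(Λ⁻¹ Q⁻¹ V² ∇_x p), where A : B denotes the full contraction A_{ij}B_{ij} and the inner expression is the matrix field whose (i,j) entry is (Λ⁻¹ Q⁻¹ V² ∇_x p)_j differentiated in x_i. -/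
open Matrix

section Helpers
variable {n : ℕ}

lemma clm_eval (L : (Fin n → ℝ) →L[ℝ] ℝ) (v : Fin n → ℝ) :
    L v = ∑ m, v m * L (Pi.single m 1) := by
  conv_lhs => rw [← Finset.univ_sum_single v]
  rw [map_sum]
  refine Finset.sum_congr rfl fun m _ => ?_
  have h : Pi.single m (v m) = v m • (Pi.single m 1 : Fin n → ℝ) := by
    rw [← Pi.single_smul, smul_eq_mul, mul_one]
  rw [h, _root_.map_smul, smul_eq_mul]

lemma clm_eval_pi (L : (Fin n → ℝ) →L[ℝ] (Fin n → ℝ)) (v : Fin n → ℝ) (i : Fin n) :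
    L v i = ∑ m, v m * L (Pi.single m 1) i := by
  conv_lhs => rw [← Finset.univ_sum_single v]
  rw [map_sum, Finset.sum_apply]
  refine Finset.sum_congr rfl fun m _ => ?_
  have h : Pi.single m (v m) = v m • (Pi.single m 1 : Fin n → ℝ) := by
    rw [← Pi.single_smul, smul_eq_mul, mul_one]
  rw [h, _root_.map_smul]
  simp

lemma pd_contDiff {f : (Fin n → ℝ) → ℝ} (hf : ContDiff ℝ 2 f) (v : Fin n → ℝ) :
    ContDiff ℝ 1 fun x => fderiv ℝ f x v :=
  (hf.fderiv_right (by norm_num)).clm_apply contDiff_const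

lemma pd_comm {f : (Fin n → ℝ) → ℝ} (hf : ContDiff ℝ 2 f) (x v w : Fin n → ℝ) :
    fderiv ℝ (fun y => fderiv ℝ f y v) x w = fderiv ℝ (fun y => fderiv ℝ f y w) x v := by
  have hd : ContDiff ℝ 1 (fderiv ℝ f) := hf.fderiv_right (by norm_num)
  have hdx : DifferentiableAt ℝ (fderiv ℝ f) x := hd.differentiable one_ne_zero x
  have he : ∀ u : Fin n → ℝ, fderiv ℝ (fun y => fderiv ℝ f y u) x
      = (fderiv ℝ (fderiv ℝ f) x).flip u := by
    intro u
    rw [fderiv_clm_apply hdx (differentiableAt_const u)]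
    ext z
    simp
  rw [he v, he w]
  exact (hf.contDiffAt.isSymmSndFDerivAt (by simp)) w v

lemma fderiv_pi_apply {f : (Fin n → ℝ) → (Fin n → ℝ)} {x : Fin n → ℝ}
    (hf : DifferentiableAt ℝ f x) (r : Fin n) (v : Fin n → ℝ) :
    fderiv ℝ (fun y => f y r) x v = fderiv ℝ f x v r := by
  have h := ((ContinuousLinearMap.proj (R := ℝ) (φ := fun _ : Fin n => ℝ)
      r).hasFDerivAt.comp x hf.hasFDerivAt).fderiv
  have h2 : (fun y => f y r) = (ContinuousLinearMap.proj (R := ℝ) (φ := fun _ : Fin n => ℝ) r) ∘ f := rfl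
  rw [h2, h]
  rfl

end Helpers

section DetHelpers
variable {n : ℕ}

lemma det_diffAt {M : (Fin n → ℝ) → Matrix (Fin n) (Fin n) ℝ} {x : Fin n → ℝ}
    (hM : ∀ r s, DifferentiableAt ℝ (fun y => M y r s) x) :
    DifferentiableAt ℝ (fun y => (M y).det) x := by
  simp_rw [Matrix.det_apply']
  refine DifferentiableAt.fun_sum fun σ _ => DifferentiableAt.const_mul ?_ _
  exact (HasFDerivAt.finset_prod (fun i _ => (hM (σ i) i).hasFDerivAt)).differentiableAt

lemma fderiv_det {M : (Fin n → ℝ) → Matrix (Fin n) (Fin n) ℝ} {x : Fin n → ℝ}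
    (hM : ∀ r s, DifferentiableAt ℝ (fun y => M y r s) x) (v : Fin n → ℝ) :
    fderiv ℝ (fun y => (M y).det) x v
      = ∑ r, ((M x).updateRow r (fun s => fderiv ℝ (fun y => M y r s) x v)).det := by
  classical
  have hprod : ∀ σ : Equiv.Perm (Fin n),
      DifferentiableAt ℝ (fun y => ∏ i, M y (σ i) i) x := fun σ =>
    (HasFDerivAt.finset_prod (fun i _ => (hM (σ i) i).hasFDerivAt)).differentiableAt
  have step1 : fderiv ℝ (fun y => (M y).det) x v
      = ∑ σ : Equiv.Perm (Fin n), (Equiv.Perm.sign σ : ℝ) *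
          ∑ i₀, (∏ j ∈ Finset.univ.erase i₀, M x (σ j) j) *
            fderiv ℝ (fun y => M y (σ i₀) i₀) x v := by
    have h1 : (fun y => (M y).det)
        = fun y => ∑ σ : Equiv.Perm (Fin n), (Equiv.Perm.sign σ : ℝ) * ∏ i, M y (σ i) i := by
      funext y; rw [Matrix.det_apply']
    rw [h1, fderiv_fun_sum fun σ _ => (hprod σ).const_mul _]
    rw [ContinuousLinearMap.sum_apply]
    refine Finset.sum_congr rfl fun σ _ => ?_
    rw [fderiv_const_mul (hprod σ)]
    rw [ContinuousLinearMap.smul_apply, smul_eq_mul]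
    congr 1
    rw [fderiv_finset_prod fun i _ => hM (σ i) i]
    rw [ContinuousLinearMap.sum_apply]
    refine Finset.sum_congr rfl fun i₀ _ => ?_
    rw [ContinuousLinearMap.smul_apply, smul_eq_mul]
  rw [step1]
  have step2 : ∀ r : Fin n,
      ((M x).updateRow r (fun s => fderiv ℝ (fun y => M y r s) x v)).det
      = ∑ σ : Equiv.Perm (Fin n), (Equiv.Perm.sign σ : ℝ) *
          ((∏ j ∈ Finset.univ.erase (σ.symm r), M x (σ j) j) *
            fderiv ℝ (fun y => M y r (σ.symm r)) x v) := by
    intro r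
    rw [Matrix.det_apply']
    refine Finset.sum_congr rfl fun σ _ => ?_
    congr 1
    rw [← Finset.mul_prod_erase Finset.univ _ (Finset.mem_univ (σ.symm r))]
    rw [mul_comm]
    congr 1
    · refine Finset.prod_congr rfl fun j hj => ?_
      rw [Matrix.updateRow_apply, if_neg]
      intro hcon
      have : j = σ.symm r := by rw [← hcon, Equiv.symm_apply_apply]
      exact (Finset.mem_erase.mp hj).1 this
    · rw [Equiv.apply_symm_apply, Matrix.updateRow_self]
  simp_rw [step2]
  rw [Finset.sum_comm]
  refine Finset.sum_congr rfl fun σ _ => ?_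
  rw [Finset.mul_sum]
  rw [← Equiv.sum_comp σ (fun r => (Equiv.Perm.sign σ : ℝ) *
      ((∏ j ∈ Finset.univ.erase (σ.symm r), M x (σ j) j) *
      fderiv ℝ (fun y => M y r (σ.symm r)) x v))]
  refine Finset.sum_congr rfl fun i₀ _ => ?_
  rw [Equiv.symm_apply_apply]

end DetHelpers

section Piola
variable {n : ℕ}

lemma det_updateRow_sum' (A : Matrix (Fin n) (Fin n) ℝ) (r : Fin n) (c : Fin n → ℝ)
    (v : Fin n → Fin n → ℝ) :
    (A.updateRow r (∑ s, c s • v s)).det = ∑ s, c s * (A.updateRow r (v s)).det := by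
  classical
  let L : (Fin n → ℝ) →ₗ[ℝ] ℝ :=
    { toFun := fun u => (A.updateRow r u).det
      map_add' := fun u w => Matrix.det_updateRow_add A r u w
      map_smul' := fun s u => Matrix.det_updateRow_smul A r s u }
  have h := map_sum L (fun s => c s • v s) Finset.univ
  simp only [L, LinearMap.coe_mk, AddHom.coe_mk, _root_.map_smul, smul_eq_mul] at h
  exact h

lemma row_swap_det (A : Matrix (Fin n) (Fin n) ℝ) {K r : Fin n} (hKr : r ≠ K)
    (u w : Fin n → ℝ) :
    ((A.updateRow K u).updateRow r w).det = -((A.updateRow K w).updateRow r u).det := by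
  classical
  have hsub : ((A.updateRow K w).updateRow r u).submatrix (Equiv.swap K r) id
      = (A.updateRow K u).updateRow r w := by
    ext i j
    simp only [Matrix.submatrix_apply, id_eq]
    rcases eq_or_ne i K with hiK | hiK
    · rw [hiK, Equiv.swap_apply_left]
      simp [Matrix.updateRow_apply, hKr, Ne.symm hKr]
    · rcases eq_or_ne i r with hir | hir
      · rw [hir, Equiv.swap_apply_right]
        simp [Matrix.updateRow_apply, hKr, Ne.symm hKr]
      · rw [Equiv.swap_apply_of_ne_of_ne hiK hir,
          Matrix.updateRow_ne hir, Matrix.updateRow_ne hiK,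
          Matrix.updateRow_ne hir, Matrix.updateRow_ne hiK]
  have hdet := Matrix.det_permute (Equiv.swap K r) ((A.updateRow K w).updateRow r u)
  rw [hsub] at hdet
  rw [hdet, Equiv.Perm.sign_swap (Ne.symm hKr)]
  simp

lemma piola {ψ : (Fin n → ℝ) → (Fin n → ℝ)} (hψ : ContDiff ℝ 2 ψ)
    (G : (Fin n → ℝ) → Matrix (Fin n) (Fin n) ℝ)
    (hG : ∀ y r s, G y r s = fderiv ℝ (fun z => ψ z r) y (Pi.single s 1))
    (K : Fin n) (y₀ : Fin n → ℝ) :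
    ∑ i, fderiv ℝ (fun y => (G y).adjugate i K) y₀ (Pi.single i 1) = 0 := by
  classical
  have hψr : ∀ r, ContDiff ℝ 2 fun z => ψ z r := fun r =>
    (ContinuousLinearMap.proj (R := ℝ) (φ := fun _ : Fin n => ℝ) r).contDiff.comp hψ
  have hGd : ∀ r s (y : Fin n → ℝ), DifferentiableAt ℝ (fun y => G y r s) y := by
    intro r s y
    have : (fun y => G y r s) = fun y => fderiv ℝ (fun z => ψ z r) y (Pi.single s 1) := by
      funext y; exact hG y r s
    rw [this]
    exact ((pd_contDiff (hψr r) _).differentiable one_ne_zero) y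
  -- symmetry of second derivatives of ψ components
  have hH : ∀ r s i, fderiv ℝ (fun y => G y r s) y₀ (Pi.single i 1)
      = fderiv ℝ (fun y => G y r i) y₀ (Pi.single s 1) := by
    intro r s i
    have e1 : (fun y => G y r s) = fun y => fderiv ℝ (fun z => ψ z r) y (Pi.single s 1) := by
      funext y; exact hG y r s
    have e2 : (fun y => G y r i) = fun y => fderiv ℝ (fun z => ψ z r) y (Pi.single i 1) := by
      funext y; exact hG y r i
    rw [e1, e2]
    exact pd_comm (hψr r) y₀ _ _
  -- derivative of each adjugate entry
  have hterm : ∀ i : Fin n, fderiv ℝ (fun y => (G y).adjugate i K) y₀ (Pi.single i 1)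
      = ∑ r, (((G y₀).updateRow K (Pi.single i 1)).updateRow r
          (fun s => if r = K then 0 else fderiv ℝ (fun y => G y r s) y₀ (Pi.single i 1))).det := by
    intro i
    have e : (fun y => (G y).adjugate i K)
        = fun y => ((G y).updateRow K (Pi.single i 1)).det := by
      funext y; rw [Matrix.adjugate_apply]
    rw [e]
    have hMd : ∀ r s, DifferentiableAt ℝ
        (fun y => ((G y).updateRow K (Pi.single i 1)) r s) y₀ := by
      intro r s
      rcases eq_or_ne r K with h | h
      · subst h; simp only [Matrix.updateRow_self]
        exact differentiableAt_const _
      · simp only [Matrix.updateRow_ne h]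
        exact hGd r s y₀
    rw [fderiv_det hMd (Pi.single i 1)]
    refine Finset.sum_congr rfl fun r _ => ?_
    have hrow : (fun s => fderiv ℝ (fun y => ((G y).updateRow K (Pi.single i 1)) r s) y₀
          (Pi.single i 1))
        = fun s => if r = K then 0 else fderiv ℝ (fun y => G y r s) y₀ (Pi.single i 1) := by
      funext s
      rcases eq_or_ne r K with h | h
      · rw [if_pos h]
        have e : (fun y => ((G y).updateRow K (Pi.single i 1)) r s)
            = fun _ => (Pi.single i 1 : Fin n → ℝ) s := by
          funext y; rw [h]; exact congrFun (Matrix.updateRow_self) s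
        rw [e, fderiv_fun_const]
        simp
      · rw [if_neg h]
        have e : (fun y => ((G y).updateRow K (Pi.single i 1)) r s)
            = fun y => G y r s := by
          funext y; exact congrFun (Matrix.updateRow_ne h) s
        rw [e]
    rw [hrow]
  simp_rw [hterm]
  rw [Finset.sum_comm]
  refine Finset.sum_eq_zero fun r _ => ?_
  rcases eq_or_ne r K with h | h
  · refine Finset.sum_eq_zero fun i _ => ?_
    apply Matrix.det_eq_zero_of_row_eq_zero r
    intro s
    simp [h]
  · -- expand the replaced row in the single-entry basis
    have hexp : ∀ i : Fin n,
        (((G y₀).updateRow K (Pi.single i 1)).updateRow r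
          (fun s => if r = K then 0 else fderiv ℝ (fun y => G y r s) y₀ (Pi.single i 1))).det
        = ∑ s, fderiv ℝ (fun y => G y r s) y₀ (Pi.single i 1) *
            (((G y₀).updateRow K (Pi.single i 1)).updateRow r (Pi.single s 1)).det := by
      intro i
      have hrow : (fun s => if r = K then 0 else fderiv ℝ (fun y => G y r s) y₀ (Pi.single i 1))
          = ∑ s, (fderiv ℝ (fun y => G y r s) y₀ (Pi.single i 1)) • (Pi.single s 1 : Fin n → ℝ) := by
        funext t
        simp only [if_neg h, Finset.sum_apply, Pi.smul_apply, smul_eq_mul]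
        rw [Finset.sum_eq_single t]
        · simp
        · intro b _ hb; simp [Pi.single_eq_of_ne (Ne.symm hb)]
        · intro hb; exact absurd (Finset.mem_univ t) hb
      rw [hrow, det_updateRow_sum']
    simp_rw [hexp]
    -- now the (i, s) double sum vanishes by symmetry/antisymmetry
    set T : Fin n → Fin n → ℝ := fun i s =>
      (((G y₀).updateRow K (Pi.single i 1)).updateRow r (Pi.single s 1)).det with hT
    set H : Fin n → Fin n → ℝ := fun s i => fderiv ℝ (fun y => G y r s) y₀ (Pi.single i 1) with hHdef
    have hTanti : ∀ i s, T i s = -T s i := by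
      intro i s
      exact row_swap_det (G y₀) h (Pi.single i 1) (Pi.single s 1)
    have hHsymm : ∀ i s, H s i = H i s := by
      intro i s; exact hH r s i
    have key : (∑ i, ∑ s, H s i * T i s) = -∑ i, ∑ s, H s i * T i s := by
      conv_lhs => rw [Finset.sum_comm]
      rw [← Finset.sum_neg_distrib]
      refine Finset.sum_congr rfl fun i _ => ?_
      rw [← Finset.sum_neg_distrib]
      refine Finset.sum_congr rfl fun s _ => ?_
      rw [hHsymm i s, hTanti s i]
      ring
    have : (∑ i, ∑ s, H s i * T i s) = 0 := by linarith
    exact this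

end Piola

section AdjDiff
variable {n : ℕ}

lemma adj_entry_diffAt {M : (Fin n → ℝ) → Matrix (Fin n) (Fin n) ℝ} {x : Fin n → ℝ}
    (hM : ∀ r s, DifferentiableAt ℝ (fun y => M y r s) x) (l K : Fin n) :
    DifferentiableAt ℝ (fun y => (M y).adjugate l K) x := by
  have e : (fun y => (M y).adjugate l K) = fun y => ((M y).updateRow K (Pi.single l 1)).det := by
    funext y; rw [Matrix.adjugate_apply]
  rw [e]
  apply det_diffAt
  intro r s
  rcases eq_or_ne r K with h | h
  · have e2 : (fun y => ((M y).updateRow K (Pi.single l 1)) r s)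
        = fun _ => (Pi.single l 1 : Fin n → ℝ) s := by
      funext y; rw [h]; exact congrFun Matrix.updateRow_self s
    rw [e2]; exact differentiableAt_const _
  · have e2 : (fun y => ((M y).updateRow K (Pi.single l 1)) r s) = fun y => M y r s :=
      funext fun y => congrFun (Matrix.updateRow_ne h) s
    rw [e2]; exact hM r s

end AdjDiff

/-- Generalized transformation identity with an arbitrary symmetric, invertible,
divergence-free tensor field Q:
∇_X² p = Λ · Q : ∇_x(Λ⁻¹ Q⁻¹ V² ∇_x p) at x = χ(X), where V² = F Fᵗ. -/
theorem stmt_7 {n : ℕ} (χ ψ : (Fin n → ℝ) → (Fin n → ℝ))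
    (hχ : ContDiff ℝ 2 χ) (hψ : ContDiff ℝ 2 ψ)
    (hlr : Function.LeftInverse ψ χ) (hrl : Function.RightInverse ψ χ)
    (F : (Fin n → ℝ) → Matrix (Fin n) (Fin n) ℝ)
    (hF : ∀ X i I, F X i I = fderiv ℝ χ X (Pi.single I 1) i)
    (Λ : (Fin n → ℝ) → ℝ) (hΛ : ∀ X, Λ X = (F X).det) (hΛpos : ∀ X, 0 < Λ X)
    (Q : (Fin n → ℝ) → Matrix (Fin n) (Fin n) ℝ)
    (hQs : ∀ x, (Q x)ᵀ = Q x) (hQinv : ∀ x, IsUnit (Q x).det)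
    (hQC : ∀ i j, ContDiff ℝ 1 fun x => Q x i j)
    (hQdiv : ∀ x j, ∑ i, fderiv ℝ (fun y => Q y i j) x (Pi.single i 1) = 0)
    (p : (Fin n → ℝ) → ℝ) (hp : ContDiff ℝ 2 p)
    (X : Fin n → ℝ) :
    ∑ I, fderiv ℝ (fun Y => fderiv ℝ (fun Z => p (χ Z)) Y (Pi.single I 1)) X (Pi.single I 1)
      = Λ X * ∑ i, ∑ j, Q (χ X) i j *
          fderiv ℝ
            (fun y => (Λ (ψ y))⁻¹ *
              ∑ l, ((Q y)⁻¹ * (F (ψ y) * (F (ψ y))ᵀ)) j l * fderiv ℝ p y (Pi.single l 1))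
            (χ X) (Pi.single i 1) := by
  classical
  have hone : (1 : WithTop ℕ∞) ≤ 2 := by norm_num
  have hχ1 : ContDiff ℝ 1 χ := hχ.of_le hone
  have hψ1 : ContDiff ℝ 1 ψ := hψ.of_le hone
  have hχd : Differentiable ℝ χ := hχ1.differentiable one_ne_zero
  have hψd : Differentiable ℝ ψ := hψ1.differentiable one_ne_zero
  have hpχ : ContDiff ℝ 2 fun Z => p (χ Z) := hp.comp hχ
  have hpd : Differentiable ℝ p := (hp.of_le hone).differentiable one_ne_zero
  -- the inverse deformation gradient
  set G : (Fin n → ℝ) → Matrix (Fin n) (Fin n) ℝ :=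
    fun y => Matrix.of fun r s => fderiv ℝ (fun z => ψ z r) y (Pi.single s 1) with hGdef
  have hGapp : ∀ (y : Fin n → ℝ) (r s : Fin n),
      G y r s = fderiv ℝ (fun z => ψ z r) y (Pi.single s 1) := fun _ _ _ => rfl
  have hψr : ∀ r, ContDiff ℝ 2 fun z => ψ z r := fun r =>
    (ContinuousLinearMap.proj (R := ℝ) (φ := fun _ : Fin n => ℝ) r).contDiff.comp hψ
  have hGC : ∀ r s, ContDiff ℝ 1 fun y => G y r s := fun r s => pd_contDiff (hψr r) _
  have hGd : ∀ r s, Differentiable ℝ fun y => G y r s :=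
    fun r s => (hGC r s).differentiable one_ne_zero
  -- chain rule identities
  have hcomp1 : ∀ Y v : Fin n → ℝ, fderiv ℝ ψ (χ Y) (fderiv ℝ χ Y v) = v := by
    intro Y v
    have h1 : fderiv ℝ (ψ ∘ χ) Y = (fderiv ℝ ψ (χ Y)).comp (fderiv ℝ χ Y) :=
      fderiv_comp (x := Y) (hψd _) (hχd _)
    have h2 : ψ ∘ χ = id := funext hlr
    rw [h2, fderiv_id] at h1
    have h3 := congrArg (fun L : (Fin n → ℝ) →L[ℝ] (Fin n → ℝ) => L v) h1.symm
    simpa using h3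
  have hcomp2 : ∀ y v : Fin n → ℝ, fderiv ℝ χ (ψ y) (fderiv ℝ ψ y v) = v := by
    intro y v
    have h1 : fderiv ℝ (χ ∘ ψ) y = (fderiv ℝ χ (ψ y)).comp (fderiv ℝ ψ y) :=
      fderiv_comp (x := y) (hχd _) (hψd _)
    have h2 : χ ∘ ψ = id := funext hrl
    rw [h2, fderiv_id] at h1
    have h3 := congrArg (fun L : (Fin n → ℝ) →L[ℝ] (Fin n → ℝ) => L v) h1.symm
    simpa using h3
  have hGfd : ∀ (y : Fin n → ℝ) (s r : Fin n), G y r s = fderiv ℝ ψ y (Pi.single s 1) r :=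
    fun y s r => (hGapp y r s).trans (fderiv_pi_apply (hψd y) r _)
  have hFψG : ∀ y, F (ψ y) * G y = 1 := by
    intro y
    ext i k
    rw [Matrix.mul_apply, Matrix.one_apply]
    have h4 : ∀ j, F (ψ y) i j * G y j k
        = fderiv ℝ ψ y (Pi.single k 1) j * fderiv ℝ χ (ψ y) (Pi.single j 1) i := by
      intro j; rw [hF, hGfd]; ring
    rw [Finset.sum_congr rfl fun j _ => h4 j,
      ← clm_eval_pi (fderiv ℝ χ (ψ y)) (fderiv ℝ ψ y (Pi.single k 1)) i,
      hcomp2 y (Pi.single k 1)]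
    simp [Pi.single_apply]
  have hGFψ : ∀ y, G y * F (ψ y) = 1 := by
    intro y
    ext r k
    rw [Matrix.mul_apply, Matrix.one_apply]
    have h4 : ∀ j, G y r j * F (ψ y) j k
        = fderiv ℝ χ (ψ y) (Pi.single k 1) j * fderiv ℝ ψ y (Pi.single j 1) r := by
      intro j; rw [hF, hGfd]; ring
    rw [Finset.sum_congr rfl fun j _ => h4 j,
      ← clm_eval_pi (fderiv ℝ ψ y) (fderiv ℝ χ (ψ y) (Pi.single k 1)) r]
    have h3 : fderiv ℝ ψ y (fderiv ℝ χ (ψ y) (Pi.single k 1)) = Pi.single k 1 := by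
      have h5 := hcomp1 (ψ y) (Pi.single k 1)
      rwa [hrl y] at h5
    rw [h3]
    simp [Pi.single_apply]
  have hΛne : ∀ Y, Λ Y ≠ 0 := fun Y => ne_of_gt (hΛpos Y)
  have hadjG : ∀ y, Matrix.adjugate (G y) = (Λ (ψ y))⁻¹ • F (ψ y) := by
    intro y
    have hdet : (G y).det * (F (ψ y)).det = 1 := by
      rw [← Matrix.det_mul, hGFψ y, Matrix.det_one]
    have hdetG : (G y).det = ((F (ψ y)).det)⁻¹ := eq_inv_of_mul_eq_one_left hdet
    have h5 : F (ψ y) * (G y * Matrix.adjugate (G y)) = F (ψ y) * ((G y).det • 1) := by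
      rw [Matrix.mul_adjugate]
    rw [← Matrix.mul_assoc, hFψG y, Matrix.one_mul, Matrix.mul_smul, Matrix.mul_one] at h5
    rw [h5, hdetG, hΛ (ψ y)]
  have hadjG' : ∀ (y : Fin n → ℝ) (i K : Fin n),
      Matrix.adjugate (G y) i K = (Λ (ψ y))⁻¹ * F (ψ y) i K := by
    intro y i K
    rw [hadjG y]
    simp [smul_eq_mul]
  have haD : ∀ (l K : Fin n) (y : Fin n → ℝ),
      DifferentiableAt ℝ (fun y => Matrix.adjugate (G y) l K) y :=
    fun l K y => adj_entry_diffAt (fun r s => hGd r s y) l K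
  -- pulled-back gradient of p∘χ
  set g : Fin n → (Fin n → ℝ) → ℝ :=
    fun K y => fderiv ℝ (fun Z => p (χ Z)) (ψ y) (Pi.single K 1) with hgdef
  have hgC : ∀ K, ContDiff ℝ 1 (g K) := fun K => (pd_contDiff hpχ _).comp hψ1
  have hgd : ∀ K, Differentiable ℝ (g K) := fun K => (hgC K).differentiable one_ne_zero
  have hgval : ∀ (K : Fin n) (y : Fin n → ℝ),
      g K y = ∑ m, F (ψ y) m K * fderiv ℝ p y (Pi.single m 1) := by
    intro K y
    have h1 : fderiv ℝ (fun Z => p (χ Z)) (ψ y)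
        = (fderiv ℝ p (χ (ψ y))).comp (fderiv ℝ χ (ψ y)) := fderiv_comp _ (hpd _) (hχd _)
    simp only [hgdef]
    rw [h1]
    simp only [ContinuousLinearMap.comp_apply]
    rw [hrl y, clm_eval (fderiv ℝ p y) _]
    refine Finset.sum_congr rfl fun m _ => ?_
    rw [hF (ψ y) m K]
  -- the Piola-transformed flux
  set w : Fin n → (Fin n → ℝ) → ℝ :=
    fun l y => ∑ K, Matrix.adjugate (G y) l K * g K y with hwdef
  have hwd : ∀ l, Differentiable ℝ (w l) := by
    intro l
    simp only [hwdef]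
    exact Differentiable.fun_sum fun K _ =>
      ((show Differentiable ℝ fun y => Matrix.adjugate (G y) l K from fun y => haD l K y).mul
        (hgd K))
  -- Q⁻¹ entries
  have hQd : ∀ i j, Differentiable ℝ fun y => Q y i j :=
    fun i j => (hQC i j).differentiable one_ne_zero
  have hQdet_ne : ∀ y, (Q y).det ≠ 0 := fun y => (isUnit_iff_ne_zero).mp (hQinv y)
  have hQadjD : ∀ j l, Differentiable ℝ fun y => Matrix.adjugate (Q y) j l :=
    fun j l y => adj_entry_diffAt (fun r s => hQd r s y) j l
  have hQdetD : Differentiable ℝ fun y => (Q y).det :=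
    fun y => det_diffAt fun r s => hQd r s y
  have hQinvE : ∀ j l, (fun y => (Q y)⁻¹ j l)
      = fun y => ((Q y).det)⁻¹ * Matrix.adjugate (Q y) j l := by
    intro j l
    funext y
    rw [Matrix.inv_def]
    simp [Ring.inverse_eq_inv', smul_eq_mul]
  have hQinvD : ∀ j l, Differentiable ℝ fun y => (Q y)⁻¹ j l := by
    intro j l
    rw [hQinvE j l]
    exact (hQdetD.inv hQdet_ne).mul (hQadjD j l)
  -- the inner vector field
  set f : Fin n → (Fin n → ℝ) → ℝ := fun j y => ∑ l, (Q y)⁻¹ j l * w l y with hfdef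
  have hfd : ∀ j, Differentiable ℝ (f j) := by
    intro j
    simp only [hfdef]
    exact Differentiable.fun_sum fun l _ => (hQinvD j l).mul (hwd l)
  have hf_eq : ∀ j, (fun y => (Λ (ψ y))⁻¹ *
      ∑ l, ((Q y)⁻¹ * (F (ψ y) * (F (ψ y))ᵀ)) j l * fderiv ℝ p y (Pi.single l 1)) = f j := by
    intro j
    funext y
    simp only [hfdef, hwdef]
    simp only [hgval, hadjG', Matrix.mul_apply, Matrix.transpose_apply]
    rw [Finset.mul_sum]
    simp only [Finset.sum_mul, Finset.mul_sum]
    rw [Finset.sum_comm]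
    refine Finset.sum_congr rfl fun k _ => ?_
    rw [Finset.sum_comm]
    refine Finset.sum_congr rfl fun K _ => ?_
    refine Finset.sum_congr rfl fun l _ => ?_
    ring
  -- step A: divergence-free Q lets us contract
  have hQw : ∀ (i : Fin n) (y : Fin n → ℝ), ∑ j, Q y i j * f j y = w i y := by
    intro i y
    simp only [hfdef]
    have h4 : ∀ j, Q y i j * ∑ l, (Q y)⁻¹ j l * w l y
        = ∑ l, Q y i j * (Q y)⁻¹ j l * w l y := by
      intro j
      rw [Finset.mul_sum]
      exact Finset.sum_congr rfl fun l _ => by ring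
    rw [Finset.sum_congr rfl fun j _ => h4 j, Finset.sum_comm]
    have h5 : ∀ l, ∑ j, Q y i j * (Q y)⁻¹ j l * w l y
        = (if i = l then 1 else 0) * w l y := by
      intro l
      rw [← Finset.sum_mul]
      have hm : ∑ j, Q y i j * (Q y)⁻¹ j l = (1 : Matrix (Fin n) (Fin n) ℝ) i l := by
        rw [← Matrix.mul_apply, Matrix.mul_nonsing_inv _ (hQinv y)]
      rw [hm, Matrix.one_apply]
    rw [Finset.sum_congr rfl fun l _ => h5 l]
    simp
  have stepA : (∑ i, ∑ j, Q (χ X) i j * fderiv ℝ (f j) (χ X) (Pi.single i 1))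
      = ∑ i, fderiv ℝ (w i) (χ X) (Pi.single i 1) := by
    have hfw : ∀ i : Fin n, fderiv ℝ (w i) (χ X) (Pi.single i 1)
        = ∑ j, (f j (χ X) * fderiv ℝ (fun y => Q y i j) (χ X) (Pi.single i 1)
            + Q (χ X) i j * fderiv ℝ (f j) (χ X) (Pi.single i 1)) := by
      intro i
      have e : w i = fun y => ∑ j, Q y i j * f j y := funext fun y => (hQw i y).symm
      rw [e, fderiv_fun_sum fun j _ => (hQd i j (χ X)).fun_mul (hfd j (χ X))]
      rw [ContinuousLinearMap.sum_apply]
      refine Finset.sum_congr rfl fun jj _ => ?_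
      rw [fderiv_fun_mul (hQd i jj (χ X)) (hfd jj (χ X))]
      simp only [ContinuousLinearMap.add_apply, ContinuousLinearMap.smul_apply, smul_eq_mul]
      ring
    rw [Finset.sum_congr rfl fun i _ => hfw i]
    have hsplit : ∑ i : Fin n, ∑ j,
        (f j (χ X) * fderiv ℝ (fun y => Q y i j) (χ X) (Pi.single i 1)
          + Q (χ X) i j * fderiv ℝ (f j) (χ X) (Pi.single i 1))
        = (∑ i : Fin n, ∑ j, f j (χ X) * fderiv ℝ (fun y => Q y i j) (χ X) (Pi.single i 1))
          + ∑ i : Fin n, ∑ j, Q (χ X) i j * fderiv ℝ (f j) (χ X) (Pi.single i 1) := by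
      rw [← Finset.sum_add_distrib]
      refine Finset.sum_congr rfl fun i _ => ?_
      rw [← Finset.sum_add_distrib]
    rw [hsplit]
    have hz : (∑ i : Fin n, ∑ j, f j (χ X) *
        fderiv ℝ (fun y => Q y i j) (χ X) (Pi.single i 1)) = 0 := by
      rw [Finset.sum_comm]
      refine Finset.sum_eq_zero fun j _ => ?_
      rw [← Finset.mul_sum, hQdiv (χ X) j, mul_zero]
    rw [hz, zero_add]
  -- step B: Piola identity reduces the divergence to the reference Laplacian
  have stepB : ∑ i, fderiv ℝ (w i) (χ X) (Pi.single i 1)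
      = (Λ X)⁻¹ * ∑ I, fderiv ℝ (fun Y => fderiv ℝ (fun Z => p (χ Z)) Y (Pi.single I 1)) X
          (Pi.single I 1) := by
    have hwi : ∀ i : Fin n, fderiv ℝ (w i) (χ X) (Pi.single i 1)
        = ∑ K, (g K (χ X) * fderiv ℝ (fun y => Matrix.adjugate (G y) i K) (χ X) (Pi.single i 1)
            + Matrix.adjugate (G (χ X)) i K * fderiv ℝ (g K) (χ X) (Pi.single i 1)) := by
      intro i
      simp only [hwdef]
      rw [fderiv_fun_sum fun K _ => (haD i K (χ X)).fun_mul (hgd K (χ X))]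
      rw [ContinuousLinearMap.sum_apply]
      refine Finset.sum_congr rfl fun K _ => ?_
      rw [fderiv_fun_mul (haD i K (χ X)) (hgd K (χ X))]
      simp only [ContinuousLinearMap.add_apply, ContinuousLinearMap.smul_apply, smul_eq_mul]
      ring
    rw [Finset.sum_congr rfl fun i _ => hwi i, Finset.sum_comm]
    have hK : ∀ K : Fin n,
        (∑ i, (g K (χ X) * fderiv ℝ (fun y => Matrix.adjugate (G y) i K) (χ X) (Pi.single i 1)
          + Matrix.adjugate (G (χ X)) i K * fderiv ℝ (g K) (χ X) (Pi.single i 1)))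
        = (Λ X)⁻¹ * fderiv ℝ (fun Y => fderiv ℝ (fun Z => p (χ Z)) Y (Pi.single K 1)) X
            (Pi.single K 1) := by
      intro K
      rw [Finset.sum_add_distrib]
      have h0 : (∑ i, g K (χ X) *
          fderiv ℝ (fun y => Matrix.adjugate (G y) i K) (χ X) (Pi.single i 1)) = 0 := by
        rw [← Finset.mul_sum, piola hψ G hGapp K (χ X), mul_zero]
      rw [h0, zero_add]
      have ha : ∀ i, Matrix.adjugate (G (χ X)) i K = (Λ X)⁻¹ * F X i K := by
        intro i
        rw [hadjG' (χ X) i K, hlr X]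
      have h6 : ∀ i : Fin n, Matrix.adjugate (G (χ X)) i K * fderiv ℝ (g K) (χ X) (Pi.single i 1)
          = (Λ X)⁻¹ * (F X i K * fderiv ℝ (g K) (χ X) (Pi.single i 1)) := by
        intro i; rw [ha i, mul_assoc]
      rw [Finset.sum_congr rfl fun i _ => h6 i, ← Finset.mul_sum]
      congr 1
      have hcomp : fderiv ℝ (fun Y => g K (χ Y)) X (Pi.single K 1)
          = fderiv ℝ (g K) (χ X) (fderiv ℝ χ X (Pi.single K 1)) := by
        have h7 : fderiv ℝ ((g K) ∘ χ) X = (fderiv ℝ (g K) (χ X)).comp (fderiv ℝ χ X) :=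
          fderiv_comp (x := X) (hgd K (χ X)) (hχd X)
        have h8 : (fun Y => g K (χ Y)) = (g K) ∘ χ := rfl
        rw [h8, h7]
        rfl
      have hgKχ : (fun Y => g K (χ Y))
          = fun Y => fderiv ℝ (fun Z => p (χ Z)) Y (Pi.single K 1) := by
        funext Y
        simp only [hgdef]
        rw [hlr Y]
      calc ∑ i, F X i K * fderiv ℝ (g K) (χ X) (Pi.single i 1)
          = ∑ i, fderiv ℝ χ X (Pi.single K 1) i * fderiv ℝ (g K) (χ X) (Pi.single i 1) := by
            refine Finset.sum_congr rfl fun i _ => ?_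
            rw [hF X i K]
        _ = fderiv ℝ (g K) (χ X) (fderiv ℝ χ X (Pi.single K 1)) :=
            (clm_eval (fderiv ℝ (g K) (χ X)) _).symm
        _ = fderiv ℝ (fun Y => g K (χ Y)) X (Pi.single K 1) := hcomp.symm
        _ = fderiv ℝ (fun Y => fderiv ℝ (fun Z => p (χ Z)) Y (Pi.single K 1)) X
            (Pi.single K 1) := by rw [hgKχ]
    rw [Finset.sum_congr rfl fun K _ => hK K, ← Finset.mul_sum]
  -- assemble
  have hrw : ∀ i j : Fin n, fderiv ℝ (fun y => (Λ (ψ y))⁻¹ *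
      ∑ l, ((Q y)⁻¹ * (F (ψ y) * (F (ψ y))ᵀ)) j l * fderiv ℝ p y (Pi.single l 1)) (χ X)
        (Pi.single i 1) = fderiv ℝ (f j) (χ X) (Pi.single i 1) := by
    intro i j
    rw [hf_eq j]
  simp only [hrw]
  rw [stepA, stepB, ← mul_assoc, mul_inv_cancel₀ (hΛne X), one_mul]
end

section
/- If the initial medium is a standard acoustic fluid (Q₀ = I, ρ₀ isotropic) and the gauge is constrained to G = F, then the resulting tensor Q = Λ⁻¹ F Q₀ Fᵗ = Λ⁻¹ F Fᵗ is divergence-free if and only if the deformation is harmonic, i.e. ∇_X² x_i = 0 for each component i (equivalently Q₀_{IJ} ∂²x_i/∂X_I∂X_J = 0 with Q₀ = I). -/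
open Matrix

namespace Stmt13Aux


variable {n : ℕ}

/-- The determinant, as a continuous multilinear map in the rows. -/
noncomputable def detC (n : ℕ) : ContinuousMultilinearMap ℝ (fun _ : Fin n => (Fin n → ℝ)) ℝ :=
  MultilinearMap.mkContinuous
    (@Matrix.detRowAlternating (Fin n) _ _ ℝ _).toMultilinearMap
    (n.factorial : ℝ) (by
      intro m
      have h1 : (@Matrix.detRowAlternating (Fin n) _ _ ℝ _).toMultilinearMap m
          = (Matrix.of m).det := rfl
      rw [h1, Matrix.det_apply]
      calc ‖∑ σ : Equiv.Perm (Fin n), Equiv.Perm.sign σ • ∏ i, Matrix.of m (σ i) i‖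
          ≤ ∑ σ : Equiv.Perm (Fin n), ‖Equiv.Perm.sign σ • ∏ i, Matrix.of m (σ i) i‖ :=
            norm_sum_le _ _
        _ ≤ ∑ _σ : Equiv.Perm (Fin n), ∏ i, ‖m i‖ := by
            refine Finset.sum_le_sum fun σ _ => ?_
            have h2 : ‖Equiv.Perm.sign σ • ∏ i, Matrix.of m (σ i) i‖
                = ‖∏ i, m (σ i) i‖ := by
              rcases Int.units_eq_one_or (Equiv.Perm.sign σ) with h | h <;>
                simp [h, Matrix.of_apply]
            rw [h2, Real.norm_eq_abs, Finset.abs_prod]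
            calc ∏ i, |m (σ i) i| ≤ ∏ i, ‖m (σ i)‖ := by
                  refine Finset.prod_le_prod (fun i _ => abs_nonneg _) fun i _ => ?_
                  exact norm_le_pi_norm (m (σ i)) i
              _ = ∏ i, ‖m i‖ := Equiv.prod_comp σ fun J => ‖m J‖
        _ = (n.factorial : ℝ) * ∏ i, ‖m i‖ := by
            rw [Finset.sum_const, Finset.card_univ, Fintype.card_perm, nsmul_eq_mul, Fintype.card_fin])

lemma detC_apply (m : Fin n → (Fin n → ℝ)) : detC n m = (Matrix.of m).det := by
  exact congrFun (congrArg DFunLike.coe (ContinuousMultilinearMap.toMultilinearMap_injective rfl)) m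

lemma detC_eq_alt (m : Fin n → (Fin n → ℝ)) :
    detC n m = Matrix.detRowAlternating (R := ℝ) m := by
  exact congrFun (congrArg DFunLike.coe (ContinuousMultilinearMap.toMultilinearMap_injective rfl)) m



variable {n : ℕ}

/-- Component of a fderiv of a map into a pi type. -/
lemma fderiv_comp_proj {m k : ℕ} {f : (Fin m → ℝ) → (Fin k → ℝ)} {y : Fin m → ℝ}
    (hf : DifferentiableAt ℝ f y) (j : Fin k) (v : Fin m → ℝ) :
    fderiv ℝ (fun z => f z j) y v = fderiv ℝ f y v j := by
  have h1 : (fun z => f z j) = (⇑(ContinuousLinearMap.proj (R := ℝ)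
      (φ := fun _ : Fin k => ℝ) j)) ∘ f := rfl
  rw [h1, fderiv_comp y (ContinuousLinearMap.proj j).differentiableAt hf,
    ContinuousLinearMap.fderiv]
  rfl

lemma pi_eq_sum_single (w : Fin n → ℝ) :
    w = ∑ K, w K • (Pi.single K 1 : Fin n → ℝ) := by
  funext q
  simp [Pi.single_apply]

/-- Applying a CLM between pi types, componentwise expansion. -/
lemma clm_apply_sum {m k : ℕ} (L : (Fin m → ℝ) →L[ℝ] (Fin k → ℝ)) (w : Fin m → ℝ) (j : Fin k) :
    L w j = ∑ K, w K * L (Pi.single K 1) j := by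
  conv_lhs => rw [pi_eq_sum_single w]
  rw [map_sum]
  simp [Finset.sum_apply]

/-- The matrix of `fderiv ψ` in the standard basis. -/
noncomputable def Mmat (ψ : (Fin n → ℝ) → (Fin n → ℝ)) (y : Fin n → ℝ) :
    Matrix (Fin n) (Fin n) ℝ :=
  Matrix.of fun I q => fderiv ℝ ψ y (Pi.single q 1) I

/-- rows of `Mmat ψ x` -/
noncomputable def rows0 (ψ : (Fin n → ℝ) → (Fin n → ℝ)) (x : Fin n → ℝ) :
    Fin n → Fin n → ℝ :=
  fun J q => fderiv ℝ ψ x (Pi.single q 1) J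

/-- The derivative of `y ↦ adjugate (Mmat ψ y) i K` at `x`. -/
noncomputable def adjD (ψ : (Fin n → ℝ) → (Fin n → ℝ)) (x : Fin n → ℝ) (i K : Fin n) :
    (Fin n → ℝ) →L[ℝ] ℝ :=
  ∑ J, ((detC n).toContinuousLinearMap (Function.update (rows0 ψ x) K (Pi.single i 1)) J).comp
    (if J = K then 0 else ContinuousLinearMap.pi fun q =>
      fderiv ℝ (fun y => fderiv ℝ ψ y (Pi.single q 1) J) x)

lemma contDiff_entry {ψ : (Fin n → ℝ) → (Fin n → ℝ)} (hψ : ContDiff ℝ 3 ψ) (J q : Fin n) :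
    ContDiff ℝ 2 fun y => fderiv ℝ ψ y (Pi.single q 1) J := by
  have h1 : ContDiff ℝ 2 (fderiv ℝ ψ) := hψ.fderiv_right (by norm_num)
  have h2 : ContDiff ℝ 2 fun y => fderiv ℝ ψ y (Pi.single q 1) :=
    h1.clm_apply contDiff_const
  exact (ContinuousLinearMap.proj (R := ℝ) (φ := fun _ : Fin n => ℝ) J).contDiff.comp h2

lemma hasFDerivAt_adjEntry {ψ : (Fin n → ℝ) → (Fin n → ℝ)} (hψ : ContDiff ℝ 3 ψ)
    (x : Fin n → ℝ) (i K : Fin n) :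
    HasFDerivAt (fun y => (Mmat ψ y).adjugate i K) (adjD ψ x i K) x := by
  have hg : ∀ J : Fin n, HasFDerivAt
      (fun y => Function.update (fun J' q => fderiv ℝ ψ y (Pi.single q 1) J')
        K (Pi.single i 1) J)
      (if J = K then 0 else ContinuousLinearMap.pi fun q =>
        fderiv ℝ (fun y => fderiv ℝ ψ y (Pi.single q 1) J) x) x := by
    intro J
    by_cases hJ : J = K
    · subst hJ
      rw [if_pos rfl]
      simp only [Function.update_self]
      exact hasFDerivAt_const _ _
    · rw [if_neg hJ]
      have : (fun y => Function.update (fun J' q => fderiv ℝ ψ y (Pi.single q 1) J')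
          K (Pi.single i 1) J) = fun y q => fderiv ℝ ψ y (Pi.single q 1) J := by
        funext y; rw [Function.update_of_ne hJ]
      rw [this]
      exact hasFDerivAt_pi.2 fun q =>
        (((contDiff_entry hψ J q).differentiable (by norm_num)) x).hasFDerivAt
  have key := HasFDerivAt.multilinear_comp (detC n) hg
  have hfun : (fun y => (Mmat ψ y).adjugate i K)
      = fun y => detC n fun J =>
          Function.update (fun J' q => fderiv ℝ ψ y (Pi.single q 1) J') K (Pi.single i 1) J := by
    funext y
    rw [Matrix.adjugate_apply, detC_apply]
    rfl
  rw [hfun]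
  show HasFDerivAt _
    (∑ J, ((detC n).toContinuousLinearMap (Function.update (rows0 ψ x) K (Pi.single i 1)) J).comp
      (if J = K then 0 else ContinuousLinearMap.pi fun q =>
        fderiv ℝ (fun y => fderiv ℝ ψ y (Pi.single q 1) J) x)) x
  exact key
/-- Schwarz symmetry for the second derivatives of a component of `ψ`. -/
lemma schwarz {ψ : (Fin n → ℝ) → (Fin n → ℝ)} (hψ : ContDiff ℝ 3 ψ)
    (x : Fin n → ℝ) (J i q : Fin n) :
    fderiv ℝ (fun y => fderiv ℝ ψ y (Pi.single q 1) J) x (Pi.single i 1)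
      = fderiv ℝ (fun y => fderiv ℝ ψ y (Pi.single i 1) J) x (Pi.single q 1) := by
  have hψd : Differentiable ℝ ψ := hψ.differentiable (by norm_num)
  have hpJ : ContDiff ℝ 3 fun z => ψ z J := by
    have := (ContinuousLinearMap.proj (R := ℝ) (φ := fun _ : Fin n => ℝ) J).contDiff.comp hψ
    exact this
  have hrw : ∀ u : Fin n → ℝ,
      (fun y => fderiv ℝ ψ y u J) = fun y => fderiv ℝ (fun z => ψ z J) y u := by
    intro u; funext y; rw [fderiv_comp_proj (hψd y) J u]
  have hfd : DifferentiableAt ℝ (fderiv ℝ (fun z => ψ z J)) x :=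
    ((hpJ.fderiv_right (m := 2) (by norm_num)).differentiable (by norm_num)) x
  have h2 : ∀ u v : Fin n → ℝ,
      fderiv ℝ (fun y => fderiv ℝ (fun z => ψ z J) y u) x v
        = fderiv ℝ (fderiv ℝ (fun z => ψ z J)) x v u := by
    intro u v
    rw [fderiv_clm_apply hfd (differentiableAt_const u)]
    simp
  have hsnd : IsSymmSndFDerivAt ℝ (fun z => ψ z J) x :=
    (hpJ.contDiffAt).isSymmSndFDerivAt (by norm_num)
  rw [hrw, hrw, h2, h2, hsnd]
lemma detC_update_expand (base : Fin n → Fin n → ℝ) (J : Fin n) (w : Fin n → ℝ) :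
    detC n (Function.update base J w)
      = ∑ q, w q * detC n (Function.update base J (Pi.single q 1)) := by
  have h1 : ∀ u, detC n (Function.update base J u)
      = (detC n).toContinuousLinearMap base J u := by
    intro u; rw [ContinuousMultilinearMap.toContinuousLinearMap_apply]
  rw [h1]
  conv_lhs => rw [pi_eq_sum_single w]
  rw [map_sum]
  refine Finset.sum_congr rfl fun q _ => ?_
  rw [_root_.map_smul, h1, smul_eq_mul]

lemma detC_update_antisym (base : Fin n → Fin n → ℝ) {J K : Fin n} (hJ : J ≠ K)
    (u v : Fin n → ℝ) :
    detC n (Function.update (Function.update base K u) J v)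
      = - detC n (Function.update (Function.update base K v) J u) := by
  have hswap := AlternatingMap.map_swap (@Matrix.detRowAlternating (Fin n) _ _ ℝ _)
      (Function.update (Function.update base K v) J u) (i := K) (j := J) (Ne.symm hJ)
  have hv : (Function.update (Function.update base K v) J u) ∘ ⇑(Equiv.swap K J)
      = Function.update (Function.update base K u) J v := by
    funext l
    rcases eq_or_ne l K with rfl | hlK
    · simp [Function.comp_apply, Equiv.swap_apply_left, Function.update_apply, hJ, Ne.symm hJ]
    · rcases eq_or_ne l J with rfl | hlJ
      · simp [Function.comp_apply, Equiv.swap_apply_right, Function.update_apply, hJ, Ne.symm hJ]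
      · simp [Function.comp_apply, Equiv.swap_apply_of_ne_of_ne hlK hlJ,
          Function.update_apply, hlK, hlJ]
  rw [detC_eq_alt, detC_eq_alt, ← hv, hswap]

lemma sum_sym_antisym (H D : Fin n → Fin n → ℝ) (hH : ∀ i q, H i q = H q i)
    (hD : ∀ i q, D i q = - D q i) : (∑ i, ∑ q, H i q * D i q) = 0 := by
  have key : (∑ i, ∑ q, H i q * D i q) = -(∑ i, ∑ q, H i q * D i q) := by
    calc (∑ i, ∑ q, H i q * D i q) = ∑ q, ∑ i, H i q * D i q := Finset.sum_comm
      _ = ∑ q, ∑ i, -(H q i * D q i) := by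
          refine Finset.sum_congr rfl fun q _ => Finset.sum_congr rfl fun i _ => ?_
          rw [hH i q, hD i q]; ring
      _ = -(∑ q, ∑ i, H q i * D q i) := by simp
      _ = -(∑ i, ∑ q, H i q * D i q) := rfl
  linarith

/-- The Piola identity: the rows of the adjugate of a gradient are divergence free. -/
lemma piola {ψ : (Fin n → ℝ) → (Fin n → ℝ)} (hψ : ContDiff ℝ 3 ψ)
    (x : Fin n → ℝ) (K : Fin n) :
    ∑ i, adjD ψ x i K (Pi.single i 1) = 0 := by
  have hterm : ∀ i : Fin n, adjD ψ x i K (Pi.single i 1)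
      = ∑ J, (if J = K then 0 else
          ∑ q, fderiv ℝ (fun y => fderiv ℝ ψ y (Pi.single q 1) J) x (Pi.single i 1)
            * detC n (Function.update (Function.update (rows0 ψ x) K (Pi.single i 1)) J
                (Pi.single q 1))) := by
    intro i
    have : adjD ψ x i K = ∑ J,
        ((detC n).toContinuousLinearMap (Function.update (rows0 ψ x) K (Pi.single i 1)) J).comp
          (if J = K then 0 else ContinuousLinearMap.pi fun q =>
            fderiv ℝ (fun y => fderiv ℝ ψ y (Pi.single q 1) J) x) := rfl
    rw [this, ContinuousLinearMap.sum_apply]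
    refine Finset.sum_congr rfl fun J _ => ?_
    by_cases hJ : J = K
    · rw [if_pos hJ, if_pos hJ, ContinuousLinearMap.comp_zero, ContinuousLinearMap.zero_apply]
    · rw [if_neg hJ, if_neg hJ, ContinuousLinearMap.comp_apply,
        ContinuousMultilinearMap.toContinuousLinearMap_apply, detC_update_expand]
      rfl
  rw [Finset.sum_congr rfl fun i _ => hterm i, Finset.sum_comm]
  refine Finset.sum_eq_zero fun J _ => ?_
  by_cases hJ : J = K
  · simp [hJ]
  · rw [Finset.sum_congr rfl fun i (_ : i ∈ Finset.univ) => if_neg hJ]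
    exact sum_sym_antisym _ _ (fun i q => schwarz hψ x J i q)
      (fun i q => detC_update_antisym (rows0 ψ x) hJ (Pi.single i 1) (Pi.single q 1))


end Stmt13Aux

open Stmt13Aux in
/-- With the gauge constrained to G = F (so Q = Λ⁻¹ F Fᵗ, starting from a standard
acoustic fluid with Q₀ = I), the tensor Q is divergence-free iff the deformation is
harmonic: ∇_X² x_i = 0 for each component i. -/
theorem stmt_13 {n : ℕ} (χ ψ : (Fin n → ℝ) → (Fin n → ℝ))
    (hχ : ContDiff ℝ 3 χ) (hψ : ContDiff ℝ 3 ψ)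
    (hlr : Function.LeftInverse ψ χ) (hrl : Function.RightInverse ψ χ)
    (F : (Fin n → ℝ) → Matrix (Fin n) (Fin n) ℝ)
    (hF : ∀ X i I, F X i I = fderiv ℝ χ X (Pi.single I 1) i)
    (Λ : (Fin n → ℝ) → ℝ) (hΛ : ∀ X, Λ X = (F X).det) (hΛpos : ∀ X, 0 < Λ X)
    (Q : (Fin n → ℝ) → Matrix (Fin n) (Fin n) ℝ)
    (hQ : ∀ x, Q x = (Λ (ψ x))⁻¹ • (F (ψ x) * (F (ψ x))ᵀ)) :
    (∀ x j, ∑ i, fderiv ℝ (fun y => Q y i j) x (Pi.single i 1) = 0) ↔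
      (∀ X i, ∑ I, fderiv ℝ (fun Y => fderiv ℝ (fun Z => χ Z i) Y (Pi.single I 1)) X
          (Pi.single I 1) = 0) := by
  classical
  have hχd : ∀ Y, DifferentiableAt ℝ χ Y := fun Y => (hχ.differentiable (by norm_num)) Y
  have hψd : ∀ y, DifferentiableAt ℝ ψ y := fun y => (hψ.differentiable (by norm_num)) y
  -- chain rule, both ways
  have hcomp1 : ∀ x, (fderiv ℝ χ (ψ x)).comp (fderiv ℝ ψ x)
      = ContinuousLinearMap.id ℝ (Fin n → ℝ) := by
    intro x
    have h1 : (χ ∘ ψ) = id := funext hrl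
    have h2 := fderiv_comp x (hχd (ψ x)) (hψd x)
    rw [h1, fderiv_id] at h2
    exact h2.symm
  have hcomp2 : ∀ x, (fderiv ℝ ψ x).comp (fderiv ℝ χ (ψ x))
      = ContinuousLinearMap.id ℝ (Fin n → ℝ) := by
    intro x
    have h1 : (ψ ∘ χ) = id := funext hlr
    have h2 := fderiv_comp (ψ x) (hψd (χ (ψ x))) (hχd (ψ x))
    rw [h1, fderiv_id, hrl x] at h2
    exact h2.symm
  -- matrix chain rule
  have hMF : ∀ x, Mmat ψ x * F (ψ x) = 1 := by
    intro x
    ext I J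
    rw [Matrix.mul_apply]
    have h3 : ∀ i, Mmat ψ x I i * F (ψ x) i J
        = (fderiv ℝ χ (ψ x) (Pi.single J 1)) i * fderiv ℝ ψ x (Pi.single i 1) I := by
      intro i; rw [hF]; show fderiv ℝ ψ x (Pi.single i 1) I * _ = _; ring
    rw [Finset.sum_congr rfl fun i _ => h3 i,
      ← clm_apply_sum (fderiv ℝ ψ x) (fderiv ℝ χ (ψ x) (Pi.single J 1)) I]
    have h4 := congrArg (fun L : (Fin n → ℝ) →L[ℝ] (Fin n → ℝ) => L (Pi.single J 1) I) (hcomp2 x)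
    simp only [ContinuousLinearMap.coe_comp', Function.comp_apply,
      ContinuousLinearMap.id_apply] at h4
    rw [h4, Matrix.one_apply, Pi.single_apply]
  have hFM : ∀ x, F (ψ x) * Mmat ψ x = 1 := by
    intro x
    ext i j
    rw [Matrix.mul_apply]
    have h3 : ∀ K, F (ψ x) i K * Mmat ψ x K j
        = (fderiv ℝ ψ x (Pi.single j 1)) K * fderiv ℝ χ (ψ x) (Pi.single K 1) i := by
      intro K; rw [hF]; show _ * fderiv ℝ ψ x (Pi.single j 1) K = _; ring
    rw [Finset.sum_congr rfl fun K _ => h3 K,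
      ← clm_apply_sum (fderiv ℝ χ (ψ x)) (fderiv ℝ ψ x (Pi.single j 1)) i]
    have h4 := congrArg (fun L : (Fin n → ℝ) →L[ℝ] (Fin n → ℝ) => L (Pi.single j 1) i) (hcomp1 x)
    simp only [ContinuousLinearMap.coe_comp', Function.comp_apply,
      ContinuousLinearMap.id_apply] at h4
    rw [h4, Matrix.one_apply, Pi.single_apply]
  have hΛne : ∀ X, Λ X ≠ 0 := fun X => ne_of_gt (hΛpos X)
  have hdetM : ∀ x, (Mmat ψ x).det = (Λ (ψ x))⁻¹ := by
    intro x
    have h1 : Λ (ψ x) * (Mmat ψ x).det = 1 := by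
      rw [hΛ, mul_comm, ← Matrix.det_mul, hMF, Matrix.det_one]
    exact eq_inv_of_mul_eq_one_right h1
  have hadj : ∀ x, (Mmat ψ x).adjugate = (Mmat ψ x).det • F (ψ x) := by
    intro x
    calc (Mmat ψ x).adjugate = (Mmat ψ x).adjugate * (Mmat ψ x * F (ψ x)) := by
          rw [hMF, Matrix.mul_one]
      _ = ((Mmat ψ x).adjugate * Mmat ψ x) * F (ψ x) := by rw [Matrix.mul_assoc]
      _ = ((Mmat ψ x).det • (1 : Matrix (Fin n) (Fin n) ℝ)) * F (ψ x) := by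
          rw [Matrix.adjugate_mul]
      _ = (Mmat ψ x).det • F (ψ x) := by rw [Matrix.smul_mul, Matrix.one_mul]
  have hQentry : ∀ y i j, Q y i j = ∑ K, (Mmat ψ y).adjugate i K * F (ψ y) j K := by
    intro y i j
    rw [hQ, Matrix.smul_apply, Matrix.mul_apply, smul_eq_mul, Finset.mul_sum]
    refine Finset.sum_congr rfl fun K _ => ?_
    have h1 : (Mmat ψ y).adjugate i K = (Λ (ψ y))⁻¹ * F (ψ y) i K := by
      rw [hadj y, Matrix.smul_apply, smul_eq_mul, hdetM]
    rw [h1, Matrix.transpose_apply]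
    ring
  -- the divergence formula
  have hdiv : ∀ x j, ∑ i, fderiv ℝ (fun y => Q y i j) x (Pi.single i 1)
      = (Λ (ψ x))⁻¹ * ∑ K, fderiv ℝ (fun Y => fderiv ℝ (fun Z => χ Z j) Y (Pi.single K 1))
          (ψ x) (Pi.single K 1) := by
    intro x j
    have hGc : ∀ K : Fin n, ContDiff ℝ 2 fun Y => fderiv ℝ χ Y (Pi.single K 1) :=
      fun K => (hχ.fderiv_right (by norm_num)).clm_apply contDiff_const
    have hGd : ∀ (K : Fin n) Y, DifferentiableAt ℝ (fun Y => fderiv ℝ χ Y (Pi.single K 1)) Y :=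
      fun K Y => ((hGc K).differentiable (by norm_num)) Y
    set B : Fin n → (Fin n → ℝ) →L[ℝ] ℝ := fun K =>
      (ContinuousLinearMap.proj (R := ℝ) (φ := fun _ : Fin n => ℝ) j).comp
        ((fderiv ℝ (fun Y => fderiv ℝ χ Y (Pi.single K 1)) (ψ x)).comp (fderiv ℝ ψ x)) with hBdef
    have hB : ∀ K, HasFDerivAt (fun y => F (ψ y) j K) (B K) x := by
      intro K
      have h0 : (fun y => F (ψ y) j K)
          = fun y => (fderiv ℝ χ (ψ y) (Pi.single K 1)) j := by
        funext y; rw [hF]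
      rw [h0, hBdef]
      exact (ContinuousLinearMap.proj (R := ℝ) (φ := fun _ : Fin n => ℝ) j).hasFDerivAt.comp x
        (((hGd K (ψ x)).hasFDerivAt).comp x (hψd x).hasFDerivAt)
    have hBval : ∀ K i, B K (Pi.single i 1)
        = ∑ I, Mmat ψ x I i
            * fderiv ℝ (fun Y => fderiv ℝ (fun Z => χ Z j) Y (Pi.single K 1))
                (ψ x) (Pi.single I 1) := by
      intro K i
      have h1 : B K (Pi.single i 1)
          = fderiv ℝ (fun Y => fderiv ℝ χ Y (Pi.single K 1)) (ψ x)
              (fderiv ℝ ψ x (Pi.single i 1)) j := rfl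
      rw [h1, clm_apply_sum (fderiv ℝ (fun Y => fderiv ℝ χ Y (Pi.single K 1)) (ψ x))
        (fderiv ℝ ψ x (Pi.single i 1)) j]
      refine Finset.sum_congr rfl fun I _ => ?_
      have h2 : (fun Y => fderiv ℝ (fun Z => χ Z j) Y (Pi.single K 1))
          = fun Y => (fderiv ℝ χ Y (Pi.single K 1)) j := by
        funext Y; rw [fderiv_comp_proj (hχd Y) j (Pi.single K 1)]
      rw [h2]
      rw [fderiv_comp_proj (f := fun Y => fderiv ℝ χ Y (Pi.single K 1)) (hGd K (ψ x)) j
        (Pi.single I 1)]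
      rfl
    have hQd : ∀ i, fderiv ℝ (fun y => Q y i j) x
        = ∑ K, ((Mmat ψ x).adjugate i K • B K + F (ψ x) j K • adjD ψ x i K) := by
      intro i
      have hfun : (fun y => Q y i j)
          = fun y => ∑ K, (Mmat ψ y).adjugate i K * F (ψ y) j K :=
        funext fun y => hQentry y i j
      rw [hfun]
      exact (HasFDerivAt.fun_sum fun K _ =>
        (hasFDerivAt_adjEntry hψ x i K).mul (hB K)).fderiv
    have hMadj : ∀ I K : Fin n, (∑ i, Mmat ψ x I i * (Mmat ψ x).adjugate i K)
        = (Λ (ψ x))⁻¹ * (if I = K then 1 else 0) := by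
      intro I K
      have h5 := congrFun (congrFun (congrArg (fun (A : Matrix (Fin n) (Fin n) ℝ) => (A : Matrix (Fin n) (Fin n) ℝ)) (Matrix.mul_adjugate (Mmat ψ x))) I) K
      rw [Matrix.mul_apply] at h5
      rw [h5]
      simp [Matrix.smul_apply, Matrix.one_apply, hdetM x]
    calc ∑ i, fderiv ℝ (fun y => Q y i j) x (Pi.single i 1)
        = ∑ i, ∑ K, ((Mmat ψ x).adjugate i K * B K (Pi.single i 1)
            + F (ψ x) j K * adjD ψ x i K (Pi.single i 1)) := by
          refine Finset.sum_congr rfl fun i _ => ?_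
          rw [hQd i]
          simp [ContinuousLinearMap.sum_apply, ContinuousLinearMap.add_apply,
            ContinuousLinearMap.smul_apply, smul_eq_mul]
      _ = (∑ K, ∑ I, (∑ i, Mmat ψ x I i * (Mmat ψ x).adjugate i K)
              * fderiv ℝ (fun Y => fderiv ℝ (fun Z => χ Z j) Y (Pi.single K 1))
                  (ψ x) (Pi.single I 1))
          + ∑ K, F (ψ x) j K * ∑ i, adjD ψ x i K (Pi.single i 1) := by
          simp only [Finset.sum_add_distrib]
          congr 1
          · calc ∑ i, ∑ K, (Mmat ψ x).adjugate i K * B K (Pi.single i 1)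
                = ∑ i, ∑ K, ∑ I, (Mmat ψ x I i * (Mmat ψ x).adjugate i K)
                    * fderiv ℝ (fun Y => fderiv ℝ (fun Z => χ Z j) Y (Pi.single K 1))
                        (ψ x) (Pi.single I 1) := by
                  refine Finset.sum_congr rfl fun i _ => Finset.sum_congr rfl fun K _ => ?_
                  rw [hBval K i, Finset.mul_sum]
                  exact Finset.sum_congr rfl fun I _ => by ring
              _ = ∑ K, ∑ i, ∑ I, (Mmat ψ x I i * (Mmat ψ x).adjugate i K)
                    * fderiv ℝ (fun Y => fderiv ℝ (fun Z => χ Z j) Y (Pi.single K 1))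
                        (ψ x) (Pi.single I 1) := Finset.sum_comm
              _ = ∑ K, ∑ I, ∑ i, (Mmat ψ x I i * (Mmat ψ x).adjugate i K)
                    * fderiv ℝ (fun Y => fderiv ℝ (fun Z => χ Z j) Y (Pi.single K 1))
                        (ψ x) (Pi.single I 1) :=
                  Finset.sum_congr rfl fun K _ => Finset.sum_comm
              _ = ∑ K, ∑ I, (∑ i, Mmat ψ x I i * (Mmat ψ x).adjugate i K)
                    * fderiv ℝ (fun Y => fderiv ℝ (fun Z => χ Z j) Y (Pi.single K 1))
                        (ψ x) (Pi.single I 1) := by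
                  refine Finset.sum_congr rfl fun K _ => Finset.sum_congr rfl fun I _ => ?_
                  rw [Finset.sum_mul]
          · rw [Finset.sum_comm (γ := Fin n)]
            exact Finset.sum_congr rfl fun K _ => (Finset.mul_sum _ _ _).symm
      _ = (Λ (ψ x))⁻¹ * ∑ K, fderiv ℝ (fun Y => fderiv ℝ (fun Z => χ Z j) Y (Pi.single K 1))
            (ψ x) (Pi.single K 1) := by
          have hpio : ∑ K, F (ψ x) j K * ∑ i, adjD ψ x i K (Pi.single i 1) = 0 :=
            Finset.sum_eq_zero fun K _ => by rw [piola hψ x K, mul_zero]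
          rw [hpio, add_zero, Finset.mul_sum]
          refine Finset.sum_congr rfl fun K _ => ?_
          have h6 : ∀ I, (∑ i, Mmat ψ x I i * (Mmat ψ x).adjugate i K)
                * fderiv ℝ (fun Y => fderiv ℝ (fun Z => χ Z j) Y (Pi.single K 1))
                    (ψ x) (Pi.single I 1)
              = if I = K then (Λ (ψ x))⁻¹
                  * fderiv ℝ (fun Y => fderiv ℝ (fun Z => χ Z j) Y (Pi.single K 1))
                      (ψ x) (Pi.single I 1) else 0 := by
            intro I
            rw [hMadj I K]
            by_cases h : I = K <;> simp [h]
          rw [Finset.sum_congr rfl fun I _ => h6 I, Finset.sum_ite_eq' Finset.univ K]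
          simp
  constructor
  · intro h X j
    have h0 := h (χ X) j
    rw [hdiv (χ X) j, hlr X] at h0
    rcases mul_eq_zero.mp h0 with h1 | h1
    · exact absurd h1 (inv_ne_zero (hΛne X))
    · exact h1
  · intro h x j
    rw [hdiv x j, h (ψ x) j, mul_zero]
end

section
/- Let ρ₀ = ρ₀ I and Q₀ = I. The transformed inertia ρ = ρ₀ Λ Q V⁻² Q is a scalar multiple of the identity, ρ = ρ I, if and only if Q = ρ^{1/2}(ρ₀Λ)^{-1/2} V, i.e. Q is proportional to the left stretch tensor V with proportionality factor √(ρ/(ρ₀Λ)). -/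
open Matrix

lemma posDef_smul_aux {d : ℕ} {V : Matrix (Fin d) (Fin d) ℝ} (hV : V.PosDef)
    {c : ℝ} (hc : 0 < c) : (c • V).PosDef := by
  refine ⟨?_, fun x hx => ?_⟩
  · unfold Matrix.IsHermitian
    rw [conjTranspose_smul, hV.1.eq]
    simp
  · simpa [Finsupp.mul_sum, mul_assoc, mul_left_comm] using mul_pos hc (hV.2 hx)

/-- Isotropic transformed inertia: with ρ₀, Λ > 0 and Q, V symmetric positive
definite, the mapped inertia ρ₀Λ Q V⁻² Q equals r·I (r > 0) iff
Q = √(r/(ρ₀Λ)) V. -/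
theorem stmt_17 {d : ℕ} (ρ₀ Λ r : ℝ) (hρ₀ : 0 < ρ₀) (hΛ : 0 < Λ) (hr : 0 < r)
    (Q V : Matrix (Fin d) (Fin d) ℝ) (hQ : Q.PosDef) (hV : V.PosDef) :
    (ρ₀ * Λ) • (Q * (V * V)⁻¹ * Q) = r • (1 : Matrix (Fin d) (Fin d) ℝ) ↔
      Q = Real.sqrt (r / (ρ₀ * Λ)) • V := by
  have hm : 0 < ρ₀ * Λ := mul_pos hρ₀ hΛ
  have hs : 0 < r / (ρ₀ * Λ) := div_pos hr hm
  have hcpos : 0 < Real.sqrt (r / (ρ₀ * Λ)) := Real.sqrt_pos.mpr hs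
  have hc2 : Real.sqrt (r / (ρ₀ * Λ)) * Real.sqrt (r / (ρ₀ * Λ)) = r / (ρ₀ * Λ) :=
    Real.mul_self_sqrt hs.le
  have hQd : IsUnit Q.det := isUnit_iff_ne_zero.mpr hQ.det_pos.ne'
  have hVd : IsUnit V.det := isUnit_iff_ne_zero.mpr hV.det_pos.ne'
  have hVVd : IsUnit (V * V).det := by rw [det_mul]; exact hVd.mul hVd
  have hQQd : IsUnit (Q * Q).det := by rw [det_mul]; exact hQd.mul hQd
  constructor
  · intro h
    have h1 : Q * (V * V)⁻¹ * Q = (r / (ρ₀ * Λ)) • (1 : Matrix (Fin d) (Fin d) ℝ) := by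
      refine smul_right_injective _ hm.ne' ?_
      show (ρ₀ * Λ) • (Q * (V * V)⁻¹ * Q)
          = (ρ₀ * Λ) • ((r / (ρ₀ * Λ)) • (1 : Matrix (Fin d) (Fin d) ℝ))
      rw [h, smul_smul, mul_div_cancel₀ r hm.ne']
    have h2 : (V * V)⁻¹ = (r / (ρ₀ * Λ)) • (Q⁻¹ * Q⁻¹) := by
      have e := congrArg (fun M => Q⁻¹ * M * Q⁻¹) h1
      rw [show Q⁻¹ * (Q * (V * V)⁻¹ * Q) * Q⁻¹
            = Q⁻¹ * Q * (V * V)⁻¹ * (Q * Q⁻¹) by noncomm_ring,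
        Matrix.nonsing_inv_mul Q hQd, Matrix.mul_nonsing_inv Q hQd,
        Matrix.one_mul, Matrix.mul_one] at e
      rw [e, Matrix.mul_smul, Matrix.smul_mul, Matrix.mul_one]
    have h3 : Q * Q = (r / (ρ₀ * Λ)) • (V * V) := by
      haveI hinv : Invertible (r / (ρ₀ * Λ)) := invertibleOfNonzero hs.ne'
      have e := congrArg (fun M => M⁻¹) h2
      rw [Matrix.nonsing_inv_nonsing_inv _ hVVd] at e
      have hQinvd : IsUnit (Q⁻¹ * Q⁻¹).det := by
        rw [det_mul, Matrix.det_nonsing_inv, Ring.inverse_eq_inv']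
        exact isUnit_iff_ne_zero.mpr (mul_ne_zero (inv_ne_zero hQ.det_pos.ne')
          (inv_ne_zero hQ.det_pos.ne'))
      rw [Matrix.inv_smul (A := Q⁻¹ * Q⁻¹) (r / (ρ₀ * Λ)) hQinvd] at e
      rw [Matrix.mul_inv_rev, Matrix.nonsing_inv_nonsing_inv _ hQd] at e
      rw [e, smul_smul, mul_invOf_self, one_smul]
    have hsq : Q ^ 2 = (Real.sqrt (r / (ρ₀ * Λ)) • V) ^ 2 := by
      rw [sq, sq, smul_mul_smul_comm, h3, hc2]
    exact (open scoped MatrixOrder in (CFC.sq_eq_sq_iff Q _ hQ.posSemidef.nonneg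
      (posDef_smul_aux hV hcpos).posSemidef.nonneg).mp hsq)
  · intro h
    subst h
    have hVinv : V * (V * V)⁻¹ * V = 1 := by
      rw [Matrix.mul_inv_rev,
        show V * (V⁻¹ * V⁻¹) * V = V * V⁻¹ * (V⁻¹ * V) by noncomm_ring,
        Matrix.mul_nonsing_inv V hVd, Matrix.nonsing_inv_mul V hVd, Matrix.one_mul]
    rw [Matrix.smul_mul, Matrix.mul_smul, Matrix.smul_mul, smul_smul, smul_smul, hVinv,
      mul_assoc, hc2, mul_div_cancel₀ r hm.ne']
end

section
/- Let F = V R with V symmetric positive definite and R a rotation, and take Q = α V with scalar field α > 0 and Λ = det F. Then div_x Q = 0 holds (via the Piola identity) if and only if the function β = −ln(Λα) satisfies ∇_X β = Rᵗ Div_X Rᵗ, i.e. β_{,K} = R_{jK} R_{jM,M}; in particular if R is a constant rotation one may take β constant, giving α = c/Λ. -/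
open Matrix

namespace S18

variable {d : ℕ}

lemma contDiff_entry (n : ℕ∞) (i j : Fin d) :
    ContDiff ℝ n (fun A : Fin d → Fin d → ℝ => A i j) :=
  (contDiff_pi.mp (contDiff_pi.mp contDiff_id i) j)

lemma contDiff_det (n : ℕ∞) :
    ContDiff ℝ n (fun A : Fin d → Fin d → ℝ => (Matrix.of A).det) := by
  simp only [Matrix.det_apply']
  apply ContDiff.sum
  intro σ _
  exact ContDiff.mul contDiff_const (contDiff_prod (fun i _ => contDiff_entry n (σ i) i))

lemma contDiff_adjugate (n : ℕ∞) (i j : Fin d) :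
    ContDiff ℝ n (fun A : Fin d → Fin d → ℝ => (Matrix.of A).adjugate i j) := by
  simp only [Matrix.adjugate_apply]
  have h : ContDiff ℝ n (fun A : Fin d → Fin d → ℝ =>
      (fun k l => ((Matrix.of A).updateRow j (Pi.single i 1)) k l : Fin d → Fin d → ℝ)) := by
    apply contDiff_pi.2; intro k; apply contDiff_pi.2; intro l
    by_cases hk : k = j
    · subst hk; simp only [Matrix.updateRow_self]; exact contDiff_const
    · simp only [Matrix.updateRow_ne hk]; exact contDiff_entry n k l
  have h2 := (contDiff_det n (d := d)).comp h
  exact h2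

lemma fderiv_dir {f : (Fin d → ℝ) → ℝ} {x : Fin d → ℝ} (hf : DifferentiableAt ℝ f x)
    (v : Fin d → ℝ) : fderiv ℝ f x v = ∑ i, v i * fderiv ℝ f x (Pi.single i 1) := by
  have hv : v = ∑ i, v i • (Pi.single i (1:ℝ) : Fin d → ℝ) := by
    funext k
    simp [Finset.sum_apply, Pi.single_apply]
  conv_lhs => rw [hv]
  rw [map_sum]
  refine Finset.sum_congr rfl fun i _ => ?_
  rw [(fderiv ℝ f x).map_smul]
  rfl

lemma snd_symm {f : (Fin d → ℝ) → (Fin d → ℝ)} (hf : ContDiff ℝ 2 f) (x : Fin d → ℝ)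
    (a i : Fin d) (c : Fin d) :
    fderiv ℝ (fun y => fderiv ℝ f y (Pi.single a 1) c) x (Pi.single i 1)
      = fderiv ℝ (fun y => fderiv ℝ f y (Pi.single i 1) c) x (Pi.single a 1) := by
  have hdf : DifferentiableAt ℝ (fderiv ℝ f) x := by
    have := (hf.fderiv_right (m := 1) (by norm_num)).differentiable (by norm_num)
    exact this x
  have key : ∀ v : Fin d → ℝ, fderiv ℝ (fun y => fderiv ℝ f y v c) x
      = ((ContinuousLinearMap.proj (R := ℝ) (φ := fun _ : Fin d => ℝ) c).comp
          (ContinuousLinearMap.apply ℝ (Fin d → ℝ) v)).comp (fderiv ℝ (fderiv ℝ f) x) := by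
    intro v
    have : (fun y => fderiv ℝ f y v c)
        = (⇑((ContinuousLinearMap.proj (R := ℝ) (φ := fun _ : Fin d => ℝ) c).comp
            (ContinuousLinearMap.apply ℝ (Fin d → ℝ) v))) ∘ (fderiv ℝ f) := rfl
    rw [this]
    exact (((ContinuousLinearMap.proj (R := ℝ) (φ := fun _ : Fin d => ℝ) c).comp
      (ContinuousLinearMap.apply ℝ (Fin d → ℝ) v)).hasFDerivAt.comp x hdf.hasFDerivAt).fderiv
  have hsymm := (hf.contDiffAt (x := x)).isSymmSndFDerivAt (by norm_num)
  have h1 := hsymm.eq (Pi.single i 1) (Pi.single a 1)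
  rw [key (Pi.single a 1), key (Pi.single i 1)]
  simp only [ContinuousLinearMap.comp_apply, ContinuousLinearMap.apply_apply,
    ContinuousLinearMap.proj_apply]
  exact congrFun h1 c

lemma det_dir_deriv (B H : Matrix (Fin d) (Fin d) ℝ) (hB : IsUnit B.det) :
    HasDerivAt (fun t : ℝ => (B + t • H).det) (B.det * (B⁻¹ * H).trace) 0 := by
  have hfac : ∀ t : ℝ, B + t • H = B * (1 + t • (B⁻¹ * H)) := by
    intro t
    rw [Matrix.mul_add, Matrix.mul_one, Matrix.mul_smul, ← Matrix.mul_assoc,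
      Matrix.mul_nonsing_inv _ hB, Matrix.one_mul]
  have hdet : ∀ t : ℝ, (B + t • H).det
      = B.det * (1 + (B⁻¹ * H).trace * t
          + ((1 + (Polynomial.X : Polynomial ℝ) • (B⁻¹ * H).map Polynomial.C).det).divX.divX.eval t * t ^ 2) := by
    intro t
    rw [hfac, Matrix.det_mul, Matrix.det_one_add_smul]
  have : HasDerivAt (fun t : ℝ => B.det * (1 + (B⁻¹ * H).trace * t
          + ((1 + (Polynomial.X : Polynomial ℝ) • (B⁻¹ * H).map Polynomial.C).det).divX.divX.eval t * t ^ 2))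
      (B.det * (B⁻¹ * H).trace) 0 := by
    set P := ((1 + (Polynomial.X : Polynomial ℝ) • (B⁻¹ * H).map Polynomial.C).det).divX.divX
    have h1 : HasDerivAt (fun t : ℝ => 1 + (B⁻¹ * H).trace * t + P.eval t * t ^ 2)
        ((B⁻¹ * H).trace) 0 := by
      have ha : HasDerivAt (fun t : ℝ => (B⁻¹ * H).trace * t) ((B⁻¹ * H).trace) 0 := by
        simpa using (hasDerivAt_id (0:ℝ)).const_mul ((B⁻¹ * H).trace)
      have hb : HasDerivAt (fun t : ℝ => P.eval t * t ^ 2) 0 0 := by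
        have hp : HasDerivAt (fun t : ℝ => P.eval t) (P.derivative.eval 0) 0 := P.hasDerivAt 0
        have hq : HasDerivAt (fun t : ℝ => t ^ 2) 0 0 := by
          simpa using (hasDerivAt_pow 2 (0:ℝ))
        simpa using hp.fun_mul hq
      simpa using ((hasDerivAt_const (0:ℝ) (1:ℝ)).fun_add ha).fun_add hb
    simpa [mul_comm] using h1.const_mul B.det
  have hfun : (fun t : ℝ => (B + t • H).det)
      = (fun t : ℝ => B.det * (1 + (B⁻¹ * H).trace * t
          + ((1 + (Polynomial.X : Polynomial ℝ) • (B⁻¹ * H).map Polynomial.C).det).divX.divX.eval t * t ^ 2)) :=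
    funext hdet
  rw [hfun]
  exact this

lemma fderiv_det_comp {m : (Fin d → ℝ) → (Fin d → Fin d → ℝ)} {x : Fin d → ℝ}
    (hm : DifferentiableAt ℝ m x) (hB : IsUnit (Matrix.of (m x)).det) (v : Fin d → ℝ) :
    fderiv ℝ (fun y => (Matrix.of (m y)).det) x v
      = (Matrix.of (m x)).det * ((Matrix.of (m x))⁻¹ * Matrix.of (fderiv ℝ m x v)).trace := by
  have hdet : DifferentiableAt ℝ (fun A : Fin d → Fin d → ℝ => (Matrix.of A).det) (m x) :=
    ((contDiff_det 1).differentiable (by norm_num)) (m x)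
  have hcomp : fderiv ℝ ((fun A : Fin d → Fin d → ℝ => (Matrix.of A).det) ∘ m) x
      = (fderiv ℝ (fun A : Fin d → Fin d → ℝ => (Matrix.of A).det) (m x)).comp (fderiv ℝ m x) :=
    fderiv_comp x hdet hm
  have hee : fderiv ℝ (fun y => (Matrix.of (m y)).det) x
      = fderiv ℝ ((fun A : Fin d → Fin d → ℝ => (Matrix.of A).det) ∘ m) x := rfl
  rw [hee, hcomp]
  -- now compute fderiv of det at B := m x in direction H := fderiv m x v
  set B := Matrix.of (m x) with hBdef
  set H := fderiv ℝ m x v with hHdef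
  have hline : HasDerivAt (fun t : ℝ => m x + t • H) H 0 := by
    simpa using ((hasDerivAt_id (0:ℝ)).smul_const H).const_add (m x)
  have hpt : m x + (0:ℝ) • H = m x := by simp
  have h1 : HasDerivAt (fun t : ℝ => (Matrix.of (m x + t • H)).det)
      (fderiv ℝ (fun A : Fin d → Fin d → ℝ => (Matrix.of A).det) (m x) H) 0 := by
    have hd2 : HasFDerivAt (fun A : Fin d → Fin d → ℝ => (Matrix.of A).det)
        (fderiv ℝ (fun A : Fin d → Fin d → ℝ => (Matrix.of A).det) (m x)) (m x + (0:ℝ) • H) := by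
      rw [hpt]; exact hdet.hasFDerivAt
    exact hd2.comp_hasDerivAt 0 hline
  have h2 : HasDerivAt (fun t : ℝ => (Matrix.of (m x + t • H)).det)
      (B.det * (B⁻¹ * Matrix.of H).trace) 0 := det_dir_deriv B (Matrix.of H) hB
  exact h1.unique h2

lemma posdef_near (V₀ : Matrix (Fin d) (Fin d) ℝ) (h : V₀.PosDef) :
    ∃ ε > 0, ∀ A : Matrix (Fin d) (Fin d) ℝ, Aᵀ = A →
      (∀ i j, |A i j - V₀ i j| ≤ ε) → A.PosDef := by
  rcases Nat.eq_zero_or_pos d with hd | hd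
  · refine ⟨1, one_pos, fun A hsym _ => ?_⟩
    subst hd
    refine ⟨show Aᴴ = A by rw [Matrix.conjTranspose_eq_transpose_of_trivial, hsym], fun x hx => ?_⟩
    exact absurd (Subsingleton.elim x 0) hx
  · -- compact sphere argument
    have hne : (Metric.sphere (0 : Fin d → ℝ) 1).Nonempty := by
      refine ⟨Pi.single ⟨0, hd⟩ 1, ?_⟩
      simp [Pi.norm_single]
    have hcomp : IsCompact (Metric.sphere (0 : Fin d → ℝ) 1) := isCompact_sphere _ _
    have hcont : Continuous fun x : Fin d → ℝ => dotProduct x (V₀ *ᵥ x) := by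
      have he : (fun x : Fin d → ℝ => dotProduct x (V₀ *ᵥ x))
          = fun x => ∑ i, x i * ∑ j, V₀ i j * x j := by
        funext x; simp [dotProduct, Matrix.mulVec]
      rw [he]
      exact continuous_finset_sum _ fun i _ => ((continuous_apply i).mul
        (continuous_finset_sum _ fun j _ => (continuous_const.mul (continuous_apply j))))
    obtain ⟨u, hu, hmin⟩ := hcomp.exists_isMinOn hne hcont.continuousOn
    set c := dotProduct u (V₀ *ᵥ u) with hc
    have hu0 : u ≠ 0 := by
      intro h0
      rw [h0] at hu
      simp at hu
    have hcpos : 0 < c := by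
      have := h.dotProduct_mulVec_pos hu0
      simpa using this
    refine ⟨c / (2 * ((d:ℝ)^2 + 1)), by positivity, fun A hsym hclose => ?_⟩
    have herm : A.IsHermitian := by
      show Aᴴ = A
      rw [Matrix.conjTranspose_eq_transpose_of_trivial, hsym]
    refine Matrix.PosDef.of_dotProduct_mulVec_pos herm (fun x hx => ?_)
    simp only [star_trivial]
    -- reduce to unit vectors
    have key : ∀ w : Fin d → ℝ, ‖w‖ = 1 → 0 < dotProduct w (A *ᵥ w) := by
      intro w hw
      have hVW : c ≤ dotProduct w (V₀ *ᵥ w) := hmin (by simp [hw])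
      have hbound : |dotProduct w ((A - V₀) *ᵥ w)| ≤ (d:ℝ)^2 * (c / (2 * ((d:ℝ)^2 + 1))) := by
        set ε := c / (2 * ((d:ℝ)^2 + 1)) with hε
        have hwi : ∀ i, |w i| ≤ 1 := by
          intro i
          have := norm_le_pi_norm w i
          rwa [hw] at this
        calc |dotProduct w ((A - V₀) *ᵥ w)|
            ≤ ∑ i, |w i * ∑ j, (A - V₀) i j * w j| := Finset.abs_sum_le_sum_abs _ _
          _ ≤ ∑ i : Fin d, ∑ j : Fin d, ε := by
              apply Finset.sum_le_sum
              intro i _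
              rw [abs_mul]
              calc |w i| * |∑ j, (A - V₀) i j * w j| ≤ 1 * ∑ j, |(A - V₀) i j * w j| := by
                    apply mul_le_mul (hwi i) (Finset.abs_sum_le_sum_abs _ _) (abs_nonneg _) zero_le_one
                _ = ∑ j, |(A - V₀) i j * w j| := one_mul _
                _ ≤ ∑ j : Fin d, ε := by
                    apply Finset.sum_le_sum
                    intro j _
                    rw [abs_mul]
                    calc |(A - V₀) i j| * |w j| ≤ ε * 1 := by
                          apply mul_le_mul _ (hwi j) (abs_nonneg _) _
                          · simpa [Matrix.sub_apply] using hclose i j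
                          · positivity
                      _ = ε := mul_one _
          _ = (d:ℝ)^2 * ε := by simp [Finset.sum_const, mul_comm]; ring
      have harith : (d:ℝ)^2 * (c / (2 * ((d:ℝ)^2 + 1))) < c := by
        rw [div_eq_mul_inv]
        rw [show (d:ℝ)^2 * (c * (2 * ((d:ℝ)^2+1))⁻¹) = c * ((d:ℝ)^2 / (2 * ((d:ℝ)^2+1))) by ring]
        nth_rewrite 2 [show c = c * 1 by ring]
        apply mul_lt_mul_of_pos_left _ hcpos
        rw [div_lt_one (by positivity)]
        nlinarith [sq_nonneg (d:ℝ)]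
      have hsplit : dotProduct w (A *ᵥ w)
          = dotProduct w (V₀ *ᵥ w) + dotProduct w ((A - V₀) *ᵥ w) := by
        rw [Matrix.sub_mulVec, dotProduct_sub]
        ring
      rw [hsplit]
      have := neg_abs_le (dotProduct w ((A - V₀) *ᵥ w))
      linarith
    -- scaling
    have hxn : ‖x‖ ≠ 0 := norm_ne_zero_iff.mpr hx
    set w := ‖x‖⁻¹ • x with hwdef
    have hw1 : ‖w‖ = 1 := by
      rw [hwdef, norm_smul]
      simp [abs_of_nonneg (norm_nonneg x), inv_mul_cancel₀ hxn]
    have hscale : dotProduct x (A *ᵥ x) = ‖x‖^2 * dotProduct w (A *ᵥ w) := by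
      rw [hwdef, Matrix.mulVec_smul, dotProduct_smul, smul_dotProduct]
      simp only [smul_eq_mul]
      have hn : ‖x‖^2 * (‖x‖⁻¹ * ‖x‖⁻¹) = 1 := by
        rw [← mul_inv, ← pow_two, mul_inv_cancel₀ (pow_ne_zero 2 hxn)]
      linear_combination (-(dotProduct x (A *ᵥ x))) * hn
    have := key w hw1
    have hn2 : (0:ℝ) < ‖x‖^2 := by positivity
    calc (0:ℝ) < ‖x‖^2 * dotProduct w (A *ᵥ w) := mul_pos hn2 this
      _ = dotProduct x (A *ᵥ x) := hscale.symm

def sylv (A : Matrix (Fin d) (Fin d) ℝ) : (Fin d → Fin d → ℝ) →ₗ[ℝ] (Fin d → Fin d → ℝ) where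
  toFun H := fun i j => ∑ k, (A i k * H k j + H i k * A k j)
  map_add' H K := by
    funext i j
    simp only [Pi.add_apply, ← Finset.sum_add_distrib]
    exact Finset.sum_congr rfl fun k _ => by ring
  map_smul' c H := by
    funext i j
    simp only [Pi.smul_apply, smul_eq_mul, RingHom.id_apply, Finset.mul_sum]
    exact Finset.sum_congr rfl fun k _ => by ring

open scoped MatrixOrder in
lemma sylv_inj {A : Matrix (Fin d) (Fin d) ℝ} (hA : A.PosDef) :
    Function.Injective (sylv A) := by
  have key : ∀ H : Fin d → Fin d → ℝ, sylv A H = 0 → H = 0 := by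
    intro H h0
    set Hm : Matrix (Fin d) (Fin d) ℝ := Matrix.of H with hHm
    have hmat : A * Hm + Hm * A = 0 := by
      ext i j
      have h := congrFun (congrFun h0 i) j
      simpa [sylv, Matrix.mul_apply, Matrix.add_apply, Finset.sum_add_distrib, hHm] using h
    by_contra hne
    have hcol : ∃ j, (fun i => H i j) ≠ (0 : Fin d → ℝ) := by
      by_contra hall
      push_neg at hall
      apply hne
      funext i j
      exact congrFun (hall j) i
    obtain ⟨j₀, hj₀⟩ := hcol
    -- t1 = trace (Hmᵀ * (A * Hm)) > 0
    have ht1 : Matrix.trace (Hmᵀ * (A * Hm))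
        = ∑ j, dotProduct (fun i => H i j) (A *ᵥ fun i => H i j) := by
      simp [Matrix.trace, Matrix.diag, Matrix.mul_apply, dotProduct,
        Matrix.mulVec, Matrix.transpose_apply, Finset.mul_sum, hHm]
    have ht1pos : 0 < Matrix.trace (Hmᵀ * (A * Hm)) := by
      rw [ht1]
      apply Finset.sum_pos'
      · intro j _
        have := hA.posSemidef.dotProduct_mulVec_nonneg (fun i => H i j)
        simpa using this
      · refine ⟨j₀, Finset.mem_univ _, ?_⟩
        have := hA.dotProduct_mulVec_pos hj₀
        simpa using this
    -- t2 = trace (Hmᵀ * (Hm * A)) ≥ 0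
    have hW := hA.posSemidef
    set W := CFC.sqrt A with hWdef
    have hWW : W * W = A := CFC.sqrt_mul_sqrt_self A hW.nonneg
    have hWt : Wᵀ = W := by
      rw [← Matrix.conjTranspose_eq_transpose_of_trivial]
      exact (Matrix.nonneg_iff_posSemidef.mp (CFC.sqrt_nonneg A)).1
    have ht2 : Matrix.trace (Hmᵀ * (Hm * A)) = Matrix.trace ((Hm * W)ᵀ * (Hm * W)) := by
      rw [Matrix.transpose_mul, hWt, ← hWW]
      rw [show Hmᵀ * (Hm * (W * W)) = (Hmᵀ * Hm * W) * W by
        simp only [Matrix.mul_assoc]]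
      rw [Matrix.trace_mul_comm (Hmᵀ * Hm * W) W]
      simp only [Matrix.mul_assoc]
    have ht2pos : 0 ≤ Matrix.trace (Hmᵀ * (Hm * A)) := by
      rw [ht2]
      have : ∀ i, 0 ≤ ((Hm * W)ᵀ * (Hm * W)) i i := by
        intro i
        rw [Matrix.mul_apply]
        exact Finset.sum_nonneg fun k _ => by
          rw [Matrix.transpose_apply]
          exact mul_self_nonneg _
      exact Finset.sum_nonneg fun i _ => this i
    have hzero : Matrix.trace (Hmᵀ * (A * Hm)) + Matrix.trace (Hmᵀ * (Hm * A)) = 0 := by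
      rw [← Matrix.trace_add, ← Matrix.mul_add, hmat, Matrix.mul_zero, Matrix.trace_zero]
    linarith
  intro H K hHK
  have h0 : sylv A (H - K) = 0 := by rw [map_sub, hHK, sub_self]
  have := key _ h0
  exact sub_eq_zero.mp this

def sqm : (Fin d → Fin d → ℝ) → (Fin d → Fin d → ℝ) := fun A i j => ∑ k, A i k * A k j

lemma sqm_contDiff : ContDiff ℝ (⊤ : ℕ∞) (sqm (d := d)) := by
  apply contDiff_pi.2; intro i; apply contDiff_pi.2; intro j
  exact ContDiff.sum fun k _ =>
    (contDiff_pi.mp (contDiff_pi.mp contDiff_id i) k).mul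
      (contDiff_pi.mp (contDiff_pi.mp contDiff_id k) j)

noncomputable def entryCLM (i j : Fin d) : (Fin d → Fin d → ℝ) →L[ℝ] ℝ :=
  (ContinuousLinearMap.proj (R := ℝ) (φ := fun _ : Fin d => ℝ) j).comp
    (ContinuousLinearMap.proj (R := ℝ) (φ := fun _ : Fin d => Fin d → ℝ) i)

lemma sqm_deriv (A₀ : Fin d → Fin d → ℝ) :
    HasFDerivAt sqm ((sylv (Matrix.of A₀)).toContinuousLinearMap) A₀ := by
  apply hasFDerivAt_pi''
  intro i
  apply hasFDerivAt_pi''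
  intro j
  have h : HasFDerivAt (fun A : Fin d → Fin d → ℝ => ∑ k, A i k * A k j)
      (∑ k, (A₀ i k • entryCLM k j + A₀ k j • entryCLM i k)) A₀ := by
    apply HasFDerivAt.fun_sum
    intro k _
    have h1 : HasFDerivAt (fun A : Fin d → Fin d → ℝ => A i k) (entryCLM i k) A₀ :=
      (entryCLM i k).hasFDerivAt
    have h2 : HasFDerivAt (fun A : Fin d → Fin d → ℝ => A k j) (entryCLM k j) A₀ :=
      (entryCLM k j).hasFDerivAt
    exact h1.mul h2
  refine h.congr_fderiv (Eq.symm ?_)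
  refine ContinuousLinearMap.ext fun H => ?_
  simp only [ContinuousLinearMap.coe_comp', Function.comp_apply,
    ContinuousLinearMap.proj_apply, LinearMap.coe_toContinuousLinearMap',
    ContinuousLinearMap.coe_sum', Finset.sum_apply, ContinuousLinearMap.add_apply,
    ContinuousLinearMap.coe_smul', Pi.smul_apply, smul_eq_mul, entryCLM]
  show sylv (Matrix.of A₀) H i j = _
  simp only [sylv, LinearMap.coe_mk, AddHom.coe_mk, Matrix.of_apply]
  exact Finset.sum_congr rfl fun k _ => by ring

noncomputable def sylvEquiv {A : Matrix (Fin d) (Fin d) ℝ} (hA : A.PosDef) :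
    (Fin d → Fin d → ℝ) ≃L[ℝ] (Fin d → Fin d → ℝ) :=
  (LinearEquiv.ofBijective (sylv A)
    ⟨sylv_inj hA, LinearMap.injective_iff_surjective.mp (sylv_inj hA)⟩).toContinuousLinearEquiv

lemma sylvEquiv_coe {A : Matrix (Fin d) (Fin d) ℝ} (hA : A.PosDef) :
    ((sylvEquiv hA : (Fin d → Fin d → ℝ) →L[ℝ] (Fin d → Fin d → ℝ)))
      = (sylv A).toContinuousLinearMap := by
  ext H : 1
  rfl

open scoped MatrixOrder in
lemma V_entries_differentiableAt {S : (Fin d → ℝ) → (Fin d → Fin d → ℝ)}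
    (hS : ContDiff ℝ 1 S) (hSsym : ∀ y i j, S y i j = S y j i)
    (V : (Fin d → ℝ) → Matrix (Fin d) (Fin d) ℝ) (hV : ∀ X, (V X).PosDef)
    (hsq : ∀ X, V X * V X = Matrix.of (S X)) (X₀ : Fin d → ℝ) :
    DifferentiableAt ℝ (fun X => (fun i j => V X i j)) X₀ := by
  classical
  have hVsym : ∀ X (i j : Fin d), V X i j = V X j i := by
    intro X i j
    have h := congrFun (congrFun ((hV X).1 : (V X)ᴴ = V X) i) j
    rw [Matrix.conjTranspose_apply] at h
    simpa using h.symm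
  set V₀ : Fin d → Fin d → ℝ := fun i j => V X₀ i j with hV₀
  have hpd : (Matrix.of V₀).PosDef := hV X₀
  have hcd : ContDiffAt ℝ 1 sqm V₀ := (sqm_contDiff.of_le (mod_cast le_top)).contDiffAt
  have hder : HasFDerivAt sqm (↑(sylvEquiv hpd) : (Fin d → Fin d → ℝ) →L[ℝ] (Fin d → Fin d → ℝ)) V₀ := by
    rw [sylvEquiv_coe]
    exact sqm_deriv V₀
  have hstrict : HasStrictFDerivAt sqm
      (↑(sylvEquiv hpd) : (Fin d → Fin d → ℝ) →L[ℝ] (Fin d → Fin d → ℝ)) V₀ :=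
    hcd.hasStrictFDerivAt' hder (by norm_num)
  set g : (Fin d → Fin d → ℝ) → (Fin d → Fin d → ℝ) :=
    hstrict.localInverse sqm _ V₀ with hg
  have hfa : sqm V₀ = S X₀ := by
    funext i j
    have := congrFun (congrFun (hsq X₀) i) j
    rw [Matrix.mul_apply] at this
    exact this
  have hgd : HasStrictFDerivAt g ((sylvEquiv hpd).symm :
      (Fin d → Fin d → ℝ) →L[ℝ] (Fin d → Fin d → ℝ)) (sqm V₀) := hstrict.to_localInverse
  have hgV₀ : g (sqm V₀) = V₀ := hstrict.localInverse_apply_image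
  set W : (Fin d → ℝ) → (Fin d → Fin d → ℝ) := fun y => g (S y) with hWdef
  have hScont : ContinuousAt S X₀ := (hS.continuous).continuousAt
  have hStend : Filter.Tendsto S (nhds X₀) (nhds (sqm V₀)) := by
    rw [hfa]; exact hScont
  have hWdiff : DifferentiableAt ℝ W X₀ := by
    have hgdiff : DifferentiableAt ℝ g (S X₀) := by
      rw [← hfa]; exact hgd.differentiableAt
    exact hgdiff.comp X₀ (hS.differentiable (by norm_num) X₀)
  have hWX₀ : W X₀ = V₀ := by
    rw [hWdef]
    show g (S X₀) = V₀
    rw [← hfa, hgV₀]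
  have hWtend : Filter.Tendsto W (nhds X₀) (nhds V₀) := by
    have hWcont : ContinuousAt W X₀ := by
      have hgcont : ContinuousAt g (S X₀) := by
        rw [← hfa]; exact hgd.differentiableAt.continuousAt
      exact hgcont.comp hScont
    rw [← hWX₀]; exact hWcont
  -- transpose map
  have htr : Continuous (fun A : Fin d → Fin d → ℝ => (fun i j => A j i)) :=
    continuous_pi fun i => continuous_pi fun j => (continuous_apply i).comp (continuous_apply j)
  have hWTtend : Filter.Tendsto (fun y => (fun i j => W y j i)) (nhds X₀) (nhds V₀) := by
    have h1 : Filter.Tendsto (fun y => (fun i j => W y j i)) (nhds X₀)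
        (nhds (fun i j => V₀ j i)) := (htr.tendsto V₀).comp hWtend
    have h2 : (fun i j => V₀ j i) = V₀ := by
      funext i j; exact (hVsym X₀ j i)
    rwa [h2] at h1
  obtain ⟨ε, hε, hball⟩ := posdef_near (V X₀) (hV X₀)
  have hev1 : ∀ᶠ y in nhds X₀, sqm (W y) = S y := hStend.eventually hstrict.eventually_right_inverse
  have hev2 : ∀ᶠ y in nhds X₀, g (sqm (W y)) = W y := hWtend.eventually hstrict.eventually_left_inverse
  have hev3 : ∀ᶠ y in nhds X₀, g (sqm (fun i j => W y j i)) = (fun i j => W y j i) :=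
    hWTtend.eventually hstrict.eventually_left_inverse
  have hev4 : ∀ᶠ y in nhds X₀, ∀ i j, |W y i j - V X₀ i j| ≤ ε := by
    have hball' : Metric.closedBall V₀ ε ∈ nhds V₀ := Metric.closedBall_mem_nhds V₀ hε
    refine (hWtend.eventually (Filter.eventually_mem_set.mpr hball')).mono ?_
    intro y hy i j
    have h1 : dist (W y) V₀ ≤ ε := Metric.mem_closedBall.mp hy
    have h2 : dist (W y i j) (V₀ i j) ≤ dist (W y) V₀ :=
      le_trans (dist_le_pi_dist (W y i) (V₀ i) j) (dist_le_pi_dist (W y) V₀ i)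
    rw [Real.dist_eq] at h2
    exact le_trans h2 h1
  have hevfinal : (fun X => (fun i j => V X i j)) =ᶠ[nhds X₀] W := by
    filter_upwards [hev1, hev2, hev3, hev4] with y h1 h2 h3 h4
    -- W y is symmetric
    have hsqmT : sqm (fun i j => W y j i) = sqm (W y) := by
      funext i j
      show (∑ k, W y k i * W y j k) = _
      have hsy : sqm (W y) i j = S y i j := congrFun (congrFun h1 i) j
      have hsy' : sqm (W y) j i = S y j i := congrFun (congrFun h1 j) i
      calc (∑ k, W y k i * W y j k) = sqm (W y) j i := by
            show _ = ∑ k, W y j k * W y k i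
            exact Finset.sum_congr rfl fun k _ => mul_comm _ _
        _ = S y j i := hsy'
        _ = S y i j := (hSsym y i j).symm
        _ = sqm (W y) i j := hsy.symm
    have hWsym : (fun i j => W y j i) = W y := by
      rw [← h3, hsqmT, h2]
    set Wm : Matrix (Fin d) (Fin d) ℝ := Matrix.of (W y) with hWm
    have hWmsym : Wmᵀ = Wm := by
      ext i j
      rw [Matrix.transpose_apply]
      exact congrFun (congrFun hWsym i) j
    have hWpd : Wm.PosDef := by
      apply hball Wm hWmsym
      intro i j
      exact h4 i j
    have hWsq : Wm * Wm = Matrix.of (S y) := by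
      ext i j
      rw [Matrix.mul_apply]
      exact congrFun (congrFun h1 i) j
    have hSps : (Matrix.of (S y)).PosSemidef := by
      have h5 : Matrix.PosSemidef ((V y)ᴴ * (V y)) := Matrix.posSemidef_conjTranspose_mul_self _
      rw [(hV y).1] at h5
      rwa [hsq y] at h5
    have e1 : V y = CFC.sqrt (Matrix.of (S y)) :=
      (CFC.sqrt_unique (hsq y) (hV y).posSemidef.nonneg).symm
    have e2 : Wm = CFC.sqrt (Matrix.of (S y)) :=
      (CFC.sqrt_unique hWsq hWpd.posSemidef.nonneg).symm
    funext i j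
    show V y i j = W y i j
    rw [show V y = Wm from e1.trans e2.symm]
    rfl
  exact hWdiff.congr_of_eventuallyEq hevfinal

lemma clm_dir (L : (Fin d → ℝ) →L[ℝ] (Fin d → ℝ)) (v : Fin d → ℝ) (a : Fin d) :
    L v a = ∑ k, v k * L (Pi.single k 1) a := by
  have hv : v = ∑ k, v k • (Pi.single k (1:ℝ) : Fin d → ℝ) := by
    funext k; simp [Finset.sum_apply, Pi.single_apply]
  conv_lhs => rw [hv]
  rw [map_sum]
  rw [Finset.sum_apply]
  exact Finset.sum_congr rfl fun k _ => by rw [L.map_smul]; rfl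

lemma fderiv_proj' {ι : Type*} [Fintype ι] {G : ι → Type*} [∀ i, NormedAddCommGroup (G i)]
    [∀ i, NormedSpace ℝ (G i)] {f : (Fin d → ℝ) → (∀ i, G i)} {x : Fin d → ℝ}
    (hf : DifferentiableAt ℝ f x) (i : ι) (v : Fin d → ℝ) :
    fderiv ℝ (fun y => f y i) x v = fderiv ℝ f x v i := by
  have h := ((ContinuousLinearMap.proj (R := ℝ) (φ := G) i).hasFDerivAt.comp x
    hf.hasFDerivAt).fderiv
  have he : (fun y => f y i) = (⇑(ContinuousLinearMap.proj (R := ℝ) (φ := G) i)) ∘ f := rfl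
  rw [he, h]
  rfl

noncomputable def Jm (ψ : (Fin d → ℝ) → (Fin d → ℝ)) (x : Fin d → ℝ) : Fin d → Fin d → ℝ :=
  fun a b => fderiv ℝ ψ x (Pi.single b 1) a

lemma jac_entry_contDiff {ψ : (Fin d → ℝ) → (Fin d → ℝ)} (hψ : ContDiff ℝ 2 ψ) (a b : Fin d) :
    ContDiff ℝ 1 (fun y => Jm ψ y a b) := by
  have h1 : ContDiff ℝ 1 (fderiv ℝ ψ) := hψ.fderiv_right (by norm_num)
  have h2 : (fun y => Jm ψ y a b)
      = (⇑((ContinuousLinearMap.proj (R := ℝ) (φ := fun _ : Fin d => ℝ) a).comp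
          (ContinuousLinearMap.apply ℝ (Fin d → ℝ) (Pi.single b 1)))) ∘ (fderiv ℝ ψ) := rfl
  rw [h2]
  exact (((ContinuousLinearMap.proj (R := ℝ) (φ := fun _ : Fin d => ℝ) a).comp
    (ContinuousLinearMap.apply ℝ (Fin d → ℝ) (Pi.single b 1))).contDiff).comp h1

lemma jac_pi_differentiable {ψ : (Fin d → ℝ) → (Fin d → ℝ)} (hψ : ContDiff ℝ 2 ψ)
    (x : Fin d → ℝ) : DifferentiableAt ℝ (fun y => Jm ψ y) x := by
  apply differentiableAt_pi.2
  intro a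
  apply differentiableAt_pi.2
  intro b
  exact ((jac_entry_contDiff hψ a b).differentiable (by norm_num)) x

lemma jac_inv {χ ψ : (Fin d → ℝ) → (Fin d → ℝ)} (hχ : ContDiff ℝ 2 χ) (hψ : ContDiff ℝ 2 ψ)
    (hlr : Function.LeftInverse ψ χ) (hrl : Function.RightInverse ψ χ) (x : Fin d → ℝ) :
    Matrix.of (Jm χ (ψ x)) * Matrix.of (Jm ψ x) = 1
      ∧ Matrix.of (Jm ψ x) * Matrix.of (Jm χ (ψ x)) = 1 := by
  have hχd : Differentiable ℝ χ := hχ.differentiable (by norm_num)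
  have hψd : Differentiable ℝ ψ := hψ.differentiable (by norm_num)
  have key : ∀ (f g : (Fin d → ℝ) → (Fin d → ℝ)) (y : Fin d → ℝ),
      Differentiable ℝ f → Differentiable ℝ g → (∀ z, f (g z) = z) →
      Matrix.of (Jm f (g y)) * Matrix.of (Jm g y) = 1 := by
    intro f g y hf hg hfg
    have hcomp : fderiv ℝ (f ∘ g) y = (fderiv ℝ f (g y)).comp (fderiv ℝ g y) :=
      fderiv_comp y (hf (g y)) (hg y)
    have hid : fderiv ℝ (f ∘ g) y = ContinuousLinearMap.id ℝ (Fin d → ℝ) := by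
      have : f ∘ g = id := funext hfg
      rw [this, fderiv_id]
    ext a b
    have h1 : ((fderiv ℝ f (g y)).comp (fderiv ℝ g y)) (Pi.single b 1) a
        = (Pi.single b 1 : Fin d → ℝ) a := by
      rw [← hcomp, hid]; rfl
    rw [Matrix.mul_apply]
    have h2 : (fderiv ℝ f (g y)) ((fderiv ℝ g y) (Pi.single b 1)) a
        = ∑ k, (fderiv ℝ g y (Pi.single b 1)) k * (fderiv ℝ f (g y)) (Pi.single k 1) a :=
      clm_dir _ _ _
    have h3 : (1 : Matrix (Fin d) (Fin d) ℝ) a b = (Pi.single b 1 : Fin d → ℝ) a := by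
      rw [Matrix.one_apply, Pi.single_apply]
    rw [h3, ← h1]
    rw [ContinuousLinearMap.comp_apply, h2]
    simp only [Matrix.of_apply, Jm]
    exact Finset.sum_congr rfl fun k _ => by ring
  constructor
  · exact key χ ψ x hχd hψd hrl
  · have := key ψ χ (ψ x) hψd hχd hlr
    rwa [hrl x] at this

lemma piola {χ ψ : (Fin d → ℝ) → (Fin d → ℝ)} (hχ : ContDiff ℝ 2 χ) (hψ : ContDiff ℝ 2 ψ)
    (hlr : Function.LeftInverse ψ χ) (hrl : Function.RightInverse ψ χ) (x : Fin d → ℝ)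
    (K : Fin d) :
    ∑ i, fderiv ℝ (fun y => (Matrix.of (Jm ψ y)).det * Jm χ (ψ y) i K) x (Pi.single i 1)
      = 0 := by
  classical
  have hJψ : ∀ y, DifferentiableAt ℝ (fun z => Jm ψ z) y := jac_pi_differentiable hψ
  have hGd : ∀ (y : Fin d → ℝ) (a b : Fin d), DifferentiableAt ℝ (fun z => Jm χ (ψ z) a b) y := by
    intro y a b
    exact (((jac_entry_contDiff hχ a b).comp (hψ.of_le (by norm_num))).differentiable (by norm_num)) y
  have hPd : ∀ (y : Fin d → ℝ) (a b : Fin d), DifferentiableAt ℝ (fun z => Jm ψ z a b) y := by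
    intro y a b
    exact ((jac_entry_contDiff hψ a b).differentiable (by norm_num)) y
  have hJdet : DifferentiableAt ℝ (fun y => (Matrix.of (Jm ψ y)).det) x := by
    have h : (fun y => (Matrix.of (Jm ψ y)).det)
        = (fun A : Fin d → Fin d → ℝ => (Matrix.of A).det) ∘ (fun y => Jm ψ y) := rfl
    rw [h]
    exact (((contDiff_det 1).differentiable (by norm_num)) (Jm ψ x)).comp x (hJψ x)
  have hinv := jac_inv hχ hψ hlr hrl x
  have hdet1 : (Matrix.of (Jm χ (ψ x))).det * (Matrix.of (Jm ψ x)).det = 1 := by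
    have h := congrArg Matrix.det hinv.1
    rwa [Matrix.det_mul, Matrix.det_one] at h
  have hPdet_unit : IsUnit (Matrix.of (Jm ψ x)).det :=
    IsUnit.of_mul_eq_one _ (by rw [mul_comm]; exact hdet1)
  have hPinv : (Matrix.of (Jm ψ x))⁻¹ = Matrix.of (Jm χ (ψ x)) := Matrix.inv_eq_left_inv hinv.1
  have hDPe : ∀ c a i, fderiv ℝ (fun y => Jm ψ y c a) x (Pi.single i 1)
      = fderiv ℝ (fun y => Jm ψ y) x (Pi.single i 1) c a := by
    intro c a i
    have h1 : DifferentiableAt ℝ (fun y => Jm ψ y c) x := differentiableAt_pi.mp (hJψ x) c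
    have e1 : fderiv ℝ (fun y => Jm ψ y c a) x (Pi.single i 1)
        = fderiv ℝ (fun y => Jm ψ y c) x (Pi.single i 1) a :=
      fderiv_proj' (f := fun z => Jm ψ z c) h1 a (Pi.single i 1)
    have e2 : fderiv ℝ (fun y => Jm ψ y c) x (Pi.single i 1)
        = fderiv ℝ (fun y => Jm ψ y) x (Pi.single i 1) c :=
      fderiv_proj' (f := fun z => Jm ψ z) (hJψ x) c (Pi.single i 1)
    exact e1.trans (congrFun e2 a)
  have hDJ : ∀ i, fderiv ℝ (fun y => (Matrix.of (Jm ψ y)).det) x (Pi.single i 1)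
      = (Matrix.of (Jm ψ x)).det * ∑ a, ∑ c, Jm χ (ψ x) a c * fderiv ℝ (fun y => Jm ψ y c a) x (Pi.single i 1) := by
    intro i
    rw [fderiv_det_comp (hJψ x) hPdet_unit (Pi.single i 1), hPinv]
    congr 1
    rw [Matrix.trace]
    simp only [Matrix.diag, Matrix.mul_apply, Matrix.of_apply]
    apply Finset.sum_congr rfl
    intro a _
    apply Finset.sum_congr rfl
    intro c _
    rw [hDPe c a i]
  have hterm : ∀ i, fderiv ℝ (fun y => (Matrix.of (Jm ψ y)).det * Jm χ (ψ y) i K) x (Pi.single i 1)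
      = fderiv ℝ (fun y => (Matrix.of (Jm ψ y)).det) x (Pi.single i 1) * Jm χ (ψ x) i K
        + (Matrix.of (Jm ψ x)).det * fderiv ℝ (fun y => Jm χ (ψ y) i K) x (Pi.single i 1) := by
    intro i
    rw [fderiv_fun_mul hJdet (hGd x i K)]
    simp only [ContinuousLinearMap.add_apply, ContinuousLinearMap.coe_smul',
      Pi.smul_apply, smul_eq_mul]
    ring
  have hrel : ∀ (y : Fin d → ℝ) (a b : Fin d), ∑ l, Jm χ (ψ y) a l * Jm ψ y l b
      = (1 : Matrix (Fin d) (Fin d) ℝ) a b := by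
    intro y a b
    have h := congrArg (fun M : Matrix (Fin d) (Fin d) ℝ => M a b) (jac_inv hχ hψ hlr hrl y).1
    simpa [Matrix.mul_apply] using h
  have hdrel : ∀ a b i, ∑ l, (fderiv ℝ (fun y => Jm χ (ψ y) a l) x (Pi.single i 1) * Jm ψ x l b
      + Jm χ (ψ x) a l * fderiv ℝ (fun y => Jm ψ y l b) x (Pi.single i 1)) = 0 := by
    intro a b i
    have hfun : (fun y => ∑ l, Jm χ (ψ y) a l * Jm ψ y l b)
        = fun _ => (1 : Matrix (Fin d) (Fin d) ℝ) a b := funext fun y => hrel y a b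
    have hd0 : fderiv ℝ (fun y => ∑ l, Jm χ (ψ y) a l * Jm ψ y l b) x (Pi.single i 1) = 0 := by
      rw [hfun, fderiv_fun_const]
      rfl
    rw [fderiv_fun_sum (fun l _ => ((hGd x a l).fun_mul (hPd x l b))),
      ContinuousLinearMap.sum_apply] at hd0
    rw [← hd0]
    apply Finset.sum_congr rfl
    intro l _
    rw [fderiv_fun_mul (hGd x a l) (hPd x l b)]
    simp only [ContinuousLinearMap.add_apply, ContinuousLinearMap.coe_smul',
      Pi.smul_apply, smul_eq_mul]
    ring
  have hPG : ∀ l k', ∑ m, Jm ψ x l m * Jm χ (ψ x) m k' = if l = k' then 1 else 0 := by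
    intro l k'
    have h := congrArg (fun M : Matrix (Fin d) (Fin d) ℝ => M l k') hinv.2
    simpa [Matrix.mul_apply, Matrix.one_apply] using h
  have hDGsum : ∀ i, fderiv ℝ (fun y => Jm χ (ψ y) i K) x (Pi.single i 1)
      = -(∑ m, (∑ l, Jm χ (ψ x) i l * fderiv ℝ (fun y => Jm ψ y l m) x (Pi.single i 1)) * Jm χ (ψ x) m K) := by
    intro i
    have h1 : ∀ m, ∑ l, fderiv ℝ (fun y => Jm χ (ψ y) i l) x (Pi.single i 1) * Jm ψ x l m
        = -(∑ l, Jm χ (ψ x) i l * fderiv ℝ (fun y => Jm ψ y l m) x (Pi.single i 1)) := by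
      intro m
      have h := hdrel i m i
      rw [Finset.sum_add_distrib] at h
      linarith
    calc fderiv ℝ (fun y => Jm χ (ψ y) i K) x (Pi.single i 1)
        = ∑ l, fderiv ℝ (fun y => Jm χ (ψ y) i l) x (Pi.single i 1) * (if l = K then 1 else 0) := by
          rw [Finset.sum_congr rfl (fun l _ => by rw [mul_ite, mul_one, mul_zero])]
          rw [Finset.sum_ite_eq' Finset.univ K (fun l => fderiv ℝ (fun y => Jm χ (ψ y) i l) x (Pi.single i 1))]
          simp
      _ = ∑ l, fderiv ℝ (fun y => Jm χ (ψ y) i l) x (Pi.single i 1) * ∑ m, Jm ψ x l m * Jm χ (ψ x) m K :=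
          Finset.sum_congr rfl fun l _ => by rw [hPG l K]
      _ = ∑ m, (∑ l, fderiv ℝ (fun y => Jm χ (ψ y) i l) x (Pi.single i 1) * Jm ψ x l m) * Jm χ (ψ x) m K := by
          simp_rw [Finset.mul_sum, Finset.sum_mul]
          rw [Finset.sum_comm]
          exact Finset.sum_congr rfl fun m _ => Finset.sum_congr rfl fun l _ => by ring
      _ = ∑ m, (-(∑ l, Jm χ (ψ x) i l * fderiv ℝ (fun y => Jm ψ y l m) x (Pi.single i 1))) * Jm χ (ψ x) m K :=
          Finset.sum_congr rfl fun m _ => by rw [h1 m]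
      _ = -(∑ m, (∑ l, Jm χ (ψ x) i l * fderiv ℝ (fun y => Jm ψ y l m) x (Pi.single i 1)) * Jm χ (ψ x) m K) := by
          rw [← Finset.sum_neg_distrib]
          exact Finset.sum_congr rfl fun m _ => by ring
  have hsym : ∀ c a i, fderiv ℝ (fun y => Jm ψ y c a) x (Pi.single i 1) = fderiv ℝ (fun y => Jm ψ y c i) x (Pi.single a 1) := by
    intro c a i
    exact snd_symm hψ x a i c
  have hcancel : (∑ i, ∑ a, ∑ c, Jm χ (ψ x) a c * fderiv ℝ (fun y => Jm ψ y c a) x (Pi.single i 1) * Jm χ (ψ x) i K)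
      = ∑ i, ∑ m, (∑ l, Jm χ (ψ x) i l * fderiv ℝ (fun y => Jm ψ y l m) x (Pi.single i 1)) * Jm χ (ψ x) m K := by
    have step1 : (∑ i, ∑ m, (∑ l, Jm χ (ψ x) i l * fderiv ℝ (fun y => Jm ψ y l m) x (Pi.single i 1)) * Jm χ (ψ x) m K)
        = ∑ i, ∑ m, ∑ l, Jm χ (ψ x) i l * fderiv ℝ (fun y => Jm ψ y l i) x (Pi.single m 1) * Jm χ (ψ x) m K := by
      apply Finset.sum_congr rfl; intro i _
      apply Finset.sum_congr rfl; intro m _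
      rw [Finset.sum_mul]
      exact Finset.sum_congr rfl fun l _ => by rw [hsym l m i]
    rw [step1]
    rw [Finset.sum_comm]
  have hstep : ∑ i, fderiv ℝ (fun y => (Matrix.of (Jm ψ y)).det * Jm χ (ψ y) i K) x (Pi.single i 1)
      = ∑ i, ((Matrix.of (Jm ψ x)).det * (∑ a, ∑ c, Jm χ (ψ x) a c * fderiv ℝ (fun y => Jm ψ y c a) x (Pi.single i 1)) * Jm χ (ψ x) i K
          + (Matrix.of (Jm ψ x)).det * (-(∑ m, (∑ l, Jm χ (ψ x) i l * fderiv ℝ (fun y => Jm ψ y l m) x (Pi.single i 1)) * Jm χ (ψ x) m K))) :=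
    Finset.sum_congr rfl fun i _ => by rw [hterm i, hDJ i, hDGsum i]
  rw [hstep]
  have e1 : ∀ i, (Matrix.of (Jm ψ x)).det * (∑ a, ∑ c, Jm χ (ψ x) a c * fderiv ℝ (fun y => Jm ψ y c a) x (Pi.single i 1)) * Jm χ (ψ x) i K
      = (Matrix.of (Jm ψ x)).det * ∑ a, ∑ c, Jm χ (ψ x) a c * fderiv ℝ (fun y => Jm ψ y c a) x (Pi.single i 1) * Jm χ (ψ x) i K := by
    intro i
    rw [mul_assoc, Finset.sum_mul]
    congr 1
    exact Finset.sum_congr rfl fun a _ => by rw [Finset.sum_mul]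
  calc ∑ i, ((Matrix.of (Jm ψ x)).det * (∑ a, ∑ c, Jm χ (ψ x) a c * fderiv ℝ (fun y => Jm ψ y c a) x (Pi.single i 1)) * Jm χ (ψ x) i K
          + (Matrix.of (Jm ψ x)).det * (-(∑ m, (∑ l, Jm χ (ψ x) i l * fderiv ℝ (fun y => Jm ψ y l m) x (Pi.single i 1)) * Jm χ (ψ x) m K)))
      = ∑ i, ((Matrix.of (Jm ψ x)).det * (∑ a, ∑ c, Jm χ (ψ x) a c * fderiv ℝ (fun y => Jm ψ y c a) x (Pi.single i 1) * Jm χ (ψ x) i K)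
          - (Matrix.of (Jm ψ x)).det * (∑ m, (∑ l, Jm χ (ψ x) i l * fderiv ℝ (fun y => Jm ψ y l m) x (Pi.single i 1)) * Jm χ (ψ x) m K)) := by
        apply Finset.sum_congr rfl; intro i _
        rw [e1 i]
        ring
    _ = (Matrix.of (Jm ψ x)).det * ((∑ i, ∑ a, ∑ c, Jm χ (ψ x) a c * fderiv ℝ (fun y => Jm ψ y c a) x (Pi.single i 1) * Jm χ (ψ x) i K)
          - ∑ i, ∑ m, (∑ l, Jm χ (ψ x) i l * fderiv ℝ (fun y => Jm ψ y l m) x (Pi.single i 1)) * Jm χ (ψ x) m K) := by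
        rw [Finset.sum_sub_distrib, ← Finset.mul_sum, ← Finset.mul_sum, ← mul_sub]
    _ = 0 := by rw [hcancel]; ring

end S18


open S18 in
/-- With F = VR (polar decomposition) and Q = α V, the divergence-free condition
div_x Q = 0 holds iff β = −ln(Λα) satisfies ∇_X β = Rᵗ Div_X Rᵗ, i.e.
β_{,K} = R_{jK} R_{jM,M}; in particular if R is a constant rotation one may take
α = c/Λ (β constant), and then div_x Q = 0. -/
theorem stmt_18 {d : ℕ} (χ ψ : (Fin d → ℝ) → (Fin d → ℝ))
    (hχ : ContDiff ℝ 2 χ) (hψ : ContDiff ℝ 2 ψ)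
    (hlr : Function.LeftInverse ψ χ) (hrl : Function.RightInverse ψ χ)
    (F V R : (Fin d → ℝ) → Matrix (Fin d) (Fin d) ℝ)
    (hF : ∀ X i I, F X i I = fderiv ℝ χ X (Pi.single I 1) i)
    (hFVR : ∀ X, F X = V X * R X)
    (hV : ∀ X, (V X).PosDef)
    (hR : ∀ X, R X * (R X)ᵀ = 1) (hRdet : ∀ X, (R X).det = 1)
    (Λ : (Fin d → ℝ) → ℝ) (hΛ : ∀ X, Λ X = (F X).det) (hΛpos : ∀ X, 0 < Λ X)
    (α : (Fin d → ℝ) → ℝ) (hα : ∀ x, 0 < α x) (hαC : ContDiff ℝ 1 α)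
    (Q : (Fin d → ℝ) → Matrix (Fin d) (Fin d) ℝ)
    (hQ : ∀ x, Q x = α x • V (ψ x))
    (β : (Fin d → ℝ) → ℝ) (hβ : ∀ X, β X = -Real.log (Λ X * α (χ X))) :
    ((∀ x j, ∑ i, fderiv ℝ (fun y => Q y i j) x (Pi.single i 1) = 0) ↔
      (∀ X K, fderiv ℝ β X (Pi.single K 1)
          = ∑ j, R X j K * ∑ M, fderiv ℝ (fun Y => R Y j M) X (Pi.single M 1))) ∧
    ((∃ R₀, ∀ X, R X = R₀) → ∀ c : ℝ, 0 < c → (∀ x, α x = c / Λ (ψ x)) →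
      ∀ x j, ∑ i, fderiv ℝ (fun y => Q y i j) x (Pi.single i 1) = 0) := by
  classical
  have hΛne : ∀ X, Λ X ≠ 0 := fun X => (hΛpos X).ne'
  have hαne : ∀ x, α x ≠ 0 := fun x => (hα x).ne'
  have hψdiff : Differentiable ℝ ψ := hψ.differentiable (by norm_num)
  have hΛJ : ∀ X, Λ X = (Matrix.of (S18.Jm χ X)).det := by
    intro X
    rw [hΛ X]
    congr 1
    ext i I
    exact hF X i I
  have hΛfun : Λ = fun X => (Matrix.of (S18.Jm χ X)).det := funext hΛJ
  have hΛd : ∀ X, DifferentiableAt ℝ Λ X := by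
    intro X
    rw [hΛfun]
    exact (((S18.contDiff_det 1).differentiable (by norm_num)) _).comp X (S18.jac_pi_differentiable hχ X)
  have hVt : ∀ X, (V X)ᵀ = V X := by
    intro X
    rw [← Matrix.conjTranspose_eq_transpose_of_trivial]
    exact (hV X).1
  have hScd : ContDiff ℝ 1 (fun X => (fun i j : Fin d => ∑ K, S18.Jm χ X i K * S18.Jm χ X j K)) := by
    apply contDiff_pi.2; intro i; apply contDiff_pi.2; intro j
    exact ContDiff.sum fun K _ => (S18.jac_entry_contDiff hχ i K).mul (S18.jac_entry_contDiff hχ j K)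
  have hsqS : ∀ X, V X * V X
      = Matrix.of (fun i j => ∑ K, S18.Jm χ X i K * S18.Jm χ X j K) := by
    intro X
    have hVsq : V X * V X = F X * (F X)ᵀ := by
      rw [hFVR X, Matrix.transpose_mul]
      rw [show V X * R X * ((R X)ᵀ * (V X)ᵀ) = V X * (R X * (R X)ᵀ) * (V X)ᵀ from by
        simp only [Matrix.mul_assoc]]
      rw [hR X, Matrix.mul_one, hVt X]
    rw [hVsq]
    ext i j
    rw [Matrix.mul_apply, Matrix.of_apply]
    apply Finset.sum_congr rfl
    intro K _
    rw [Matrix.transpose_apply, hF X i K, hF X j K]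
    rfl
  have hVd : ∀ X₀, DifferentiableAt ℝ (fun X => (fun i j => V X i j)) X₀ := fun X₀ =>
    S18.V_entries_differentiableAt hScd
      (fun y i j => Finset.sum_congr rfl fun K _ => mul_comm _ _) V hV hsqS X₀
  have hVdetne : ∀ X, (V X).det ≠ 0 := fun X => (hV X).det_pos.ne'
  have hdetVd : ∀ X₀, DifferentiableAt ℝ (fun X => (V X).det) X₀ := by
    intro X₀
    exact (((S18.contDiff_det 1).differentiable (by norm_num)) (fun i j => V X₀ i j)).comp (f := fun X => fun i j => V X i j) X₀ (hVd X₀)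
  have hRe : ∀ (X₀ : Fin d → ℝ) (j M : Fin d), DifferentiableAt ℝ (fun X => R X j M) X₀ := by
    intro X₀ j M
    have hfun : (fun X => R X j M)
        = fun X => ((V X).det)⁻¹ * ∑ k, (V X).adjugate j k * F X k M := by
      funext X
      have hRV : R X = (V X)⁻¹ * F X := by
        rw [hFVR X, ← Matrix.mul_assoc, Matrix.nonsing_inv_mul _ ((Ne.isUnit (hVdetne X))),
          Matrix.one_mul]
      rw [hRV, Matrix.mul_apply, Matrix.inv_def, Finset.mul_sum]
      apply Finset.sum_congr rfl
      intro k _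
      rw [Matrix.smul_apply, smul_eq_mul, Ring.inverse_eq_inv]
      ring
    rw [hfun]
    apply DifferentiableAt.fun_mul
    · exact (hdetVd X₀).inv (hVdetne X₀)
    · apply DifferentiableAt.fun_sum
      intro k _
      apply DifferentiableAt.fun_mul
      · exact (((S18.contDiff_adjugate 1 j k).differentiable (by norm_num))
          (fun a b => V X₀ a b)).comp (f := fun X => fun a b => V X a b) X₀ (hVd X₀)
      · have hFf : (fun X => F X k M) = fun X => S18.Jm χ X k M := funext fun X => hF X k M
        rw [hFf]
        exact ((S18.jac_entry_contDiff hχ k M).differentiable (by norm_num)) X₀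
  have hγd : ∀ X, DifferentiableAt ℝ (fun Y => Λ Y * α (χ Y)) X := fun X =>
    (hΛd X).mul ((hαC.differentiable (by norm_num) (χ X)).comp X (hχ.differentiable (by norm_num) X))
  have hγpos : ∀ X, 0 < Λ X * α (χ X) := fun X => mul_pos (hΛpos X) (hα _)
  have hβfun : β = fun X => -Real.log (Λ X * α (χ X)) := funext hβ
  have hβd : ∀ X, DifferentiableAt ℝ β X := by
    intro X
    rw [hβfun]
    exact ((Real.differentiableAt_log (hγpos X).ne').comp X (hγd X)).neg
  have hβder : ∀ (X : Fin d → ℝ) (v : Fin d → ℝ), fderiv ℝ (fun Y => Λ Y * α (χ Y)) X v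
      = -(Λ X * α (χ X)) * fderiv ℝ β X v := by
    intro X v
    have hlog : HasFDerivAt (fun Y => Real.log (Λ Y * α (χ Y)))
        ((Λ X * α (χ X))⁻¹ • fderiv ℝ (fun Y => Λ Y * α (χ Y)) X) X :=
      ((hγd X).hasFDerivAt).log (hγpos X).ne'
    have hβh : HasFDerivAt β (-((Λ X * α (χ X))⁻¹ • fderiv ℝ (fun Y => Λ Y * α (χ Y)) X)) X := by
      rw [hβfun]
      exact hlog.neg
    rw [hβh.fderiv]
    simp only [ContinuousLinearMap.neg_apply, ContinuousLinearMap.coe_smul',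
      Pi.smul_apply, smul_eq_mul]
    rw [neg_mul_neg, ← mul_assoc, mul_inv_cancel₀ (hγpos X).ne', one_mul]
  have hgder : ∀ (x v : Fin d → ℝ), fderiv ℝ (fun y => Λ (ψ y) * α y) x v
      = -(Λ (ψ x) * α x) * fderiv ℝ β (ψ x) (fderiv ℝ ψ x v) := by
    intro x v
    have h1 : fderiv ℝ (fun y => Λ (ψ y) * α y) x v
        = fderiv ℝ (fun Y => Λ Y * α (χ Y)) (ψ x) (fderiv ℝ ψ x v) := by
      have he : (fun y => Λ (ψ y) * α y) = (fun Y => Λ Y * α (χ Y)) ∘ ψ := by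
        funext y
        simp only [Function.comp_apply]
        rw [hrl y]
      rw [he, fderiv_comp x (hγd (ψ x)) (hψdiff x)]
      rfl
    rw [h1, hβder (ψ x) (fderiv ℝ ψ x v), hrl x]


  have main : ∀ x j, ∑ i, fderiv ℝ (fun y => Q y i j) x (Pi.single i 1)
      = α x * ((∑ K, fderiv ℝ (fun Y => R Y j K) (ψ x) (Pi.single K 1))
          - ∑ K, R (ψ x) j K * fderiv ℝ β (ψ x) (Pi.single K 1)) := by
    intro x j
    have hdetd : ∀ y : Fin d → ℝ, DifferentiableAt ℝ (fun z => (Matrix.of (S18.Jm ψ z)).det) y := by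
      intro y
      exact (((S18.contDiff_det 1).differentiable (by norm_num)) (S18.Jm ψ y)).comp y
        (S18.jac_pi_differentiable hψ y)
    have hGd : ∀ (y : Fin d → ℝ) (a b : Fin d),
        DifferentiableAt ℝ (fun z => S18.Jm χ (ψ z) a b) y := by
      intro y a b
      exact (((S18.jac_entry_contDiff hχ a b).comp (hψ.of_le (by norm_num))).differentiable
        (by norm_num)) y
    have hud : ∀ (i K : Fin d) (y : Fin d → ℝ),
        DifferentiableAt ℝ (fun z => (Matrix.of (S18.Jm ψ z)).det * S18.Jm χ (ψ z) i K) y := fun i K y =>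
      (hdetd y).mul (hGd y i K)
    have hρd : ∀ (K : Fin d) (y : Fin d → ℝ),
        DifferentiableAt ℝ (fun z => R (ψ z) j K) y := fun K y =>
      (hRe (ψ y) j K).comp y (hψdiff y)
    have hgd : ∀ y : Fin d → ℝ, DifferentiableAt ℝ (fun z => Λ (ψ z) * α z) y := fun y =>
      ((hΛd (ψ y)).comp y (hψdiff y)).mul (hαC.differentiable (by norm_num) y)
    have hsumd : ∀ (i : Fin d) (y : Fin d → ℝ),
        DifferentiableAt ℝ (fun z => ∑ K, ((Matrix.of (S18.Jm ψ z)).det * S18.Jm χ (ψ z) i K) * R (ψ z) j K) y := fun i y =>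
      DifferentiableAt.fun_sum (fun K _ => (hud i K y).mul (hρd K y))
    have hdp : ∀ y : Fin d → ℝ, (Matrix.of (S18.Jm ψ y)).det * Λ (ψ y) = 1 := by
      intro y
      have h := congrArg Matrix.det (S18.jac_inv hχ hψ hlr hrl y).2
      rw [Matrix.det_mul, Matrix.det_one] at h
      rw [hΛJ (ψ y)]
      exact h
    have hVFRT : ∀ X, V X = F X * (R X)ᵀ := by
      intro X
      rw [hFVR X, Matrix.mul_assoc, hR X, Matrix.mul_one]
    have hQent : ∀ i : Fin d, (fun y => Q y i j)
        = fun y => (Λ (ψ y) * α y) * ∑ K, ((Matrix.of (S18.Jm ψ y)).det * S18.Jm χ (ψ y) i K) * R (ψ y) j K := by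
      intro i
      funext y
      rw [hQ y, Matrix.smul_apply, smul_eq_mul, hVFRT (ψ y), Matrix.mul_apply,
        Finset.mul_sum, Finset.mul_sum]
      apply Finset.sum_congr rfl
      intro K _
      rw [Matrix.transpose_apply, hF (ψ y) i K]
      have h := hdp y
      have hJG : (fderiv ℝ χ (ψ y)) (Pi.single K 1) i = S18.Jm χ (ψ y) i K := rfl
      rw [hJG]
      linear_combination (-(α y * S18.Jm χ (ψ y) i K * R (ψ y) j K)) * h
    have hDi : ∀ i : Fin d, fderiv ℝ (fun y => Q y i j) x (Pi.single i 1)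
        = (∑ K, ((Matrix.of (S18.Jm ψ x)).det * S18.Jm χ (ψ x) i K) * R (ψ x) j K) * fderiv ℝ (fun y => Λ (ψ y) * α y) x (Pi.single i 1)
          + (Λ (ψ x) * α x) * ∑ K, (R (ψ x) j K * fderiv ℝ (fun y => (Matrix.of (S18.Jm ψ y)).det * S18.Jm χ (ψ y) i K) x (Pi.single i 1))
          + (Λ (ψ x) * α x) * ∑ K, (((Matrix.of (S18.Jm ψ x)).det * S18.Jm χ (ψ x) i K) * fderiv ℝ (fun y => R (ψ y) j K) x (Pi.single i 1)) := by
      intro i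
      rw [hQent i]
      rw [fderiv_fun_mul (hgd x) (hsumd i x)]
      simp only [ContinuousLinearMap.add_apply, ContinuousLinearMap.coe_smul',
        Pi.smul_apply, smul_eq_mul]
      rw [fderiv_fun_sum (fun K _ => (hud i K x).fun_mul (hρd K x)), ContinuousLinearMap.sum_apply]
      rw [show (∑ K, fderiv ℝ (fun z => ((Matrix.of (S18.Jm ψ z)).det * S18.Jm χ (ψ z) i K) * R (ψ z) j K) x (Pi.single i 1))
          = ∑ K, (R (ψ x) j K * fderiv ℝ (fun y => (Matrix.of (S18.Jm ψ y)).det * S18.Jm χ (ψ y) i K) x (Pi.single i 1) + ((Matrix.of (S18.Jm ψ x)).det * S18.Jm χ (ψ x) i K) * fderiv ℝ (fun y => R (ψ y) j K) x (Pi.single i 1)) from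
        Finset.sum_congr rfl fun K _ => by
          rw [fderiv_fun_mul (hud i K x) (hρd K x)]
          simp only [ContinuousLinearMap.add_apply, ContinuousLinearMap.coe_smul',
            Pi.smul_apply, smul_eq_mul]
          ring]
      rw [Finset.sum_add_distrib]
      ring
    have hPGx : ∀ M K : Fin d, (∑ i, S18.Jm ψ x M i * ((Matrix.of (S18.Jm ψ x)).det * S18.Jm χ (ψ x) i K))
        = (Matrix.of (S18.Jm ψ x)).det * (if M = K then 1 else 0) := by
      intro M K
      have h := congrArg (fun Mm : Matrix (Fin d) (Fin d) ℝ => Mm M K)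
        (S18.jac_inv hχ hψ hlr hrl x).2
      simp only [Matrix.mul_apply, Matrix.of_apply, Matrix.one_apply] at h
      calc (∑ i, S18.Jm ψ x M i * ((Matrix.of (S18.Jm ψ x)).det * S18.Jm χ (ψ x) i K))
          = (Matrix.of (S18.Jm ψ x)).det * ∑ i, S18.Jm ψ x M i * S18.Jm χ (ψ x) i K := by
            rw [Finset.mul_sum]
            exact Finset.sum_congr rfl fun i _ => by ring
        _ = (Matrix.of (S18.Jm ψ x)).det * (if M = K then 1 else 0) := by rw [h]
    have hDg : ∀ i : Fin d, fderiv ℝ (fun y => Λ (ψ y) * α y) x (Pi.single i 1)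
        = -((Λ (ψ x) * α x) * ∑ M, S18.Jm ψ x M i * fderiv ℝ β (ψ x) (Pi.single M 1)) := by
      intro i
      rw [hgder x (Pi.single i 1)]
      rw [S18.fderiv_dir (hβd (ψ x)) (fderiv ℝ ψ x (Pi.single i 1))]
      simp only [S18.Jm]
      ring
    have hDrho : ∀ (K i : Fin d), fderiv ℝ (fun y => R (ψ y) j K) x (Pi.single i 1) = ∑ M, S18.Jm ψ x M i * fderiv ℝ (fun Y => R Y j K) (ψ x) (Pi.single M 1) := by
      intro K i
      have he : (fun y => R (ψ y) j K) = (fun Y => R Y j K) ∘ ψ := rfl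
      rw [he, fderiv_comp x (hRe (ψ x) j K) (hψdiff x)]
      rw [ContinuousLinearMap.comp_apply]
      rw [S18.fderiv_dir (hRe (ψ x) j K) (fderiv ℝ ψ x (Pi.single i 1))]
      simp only [S18.Jm]
    have hgJP : (Λ (ψ x) * α x) * (Matrix.of (S18.Jm ψ x)).det = α x := by
      have h := hdp x
      linear_combination (α x) * h
    have hT2 : (∑ i, ∑ K, (R (ψ x) j K * fderiv ℝ (fun y => (Matrix.of (S18.Jm ψ y)).det * S18.Jm χ (ψ y) i K) x (Pi.single i 1))) = 0 := by
      rw [Finset.sum_comm]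
      apply Finset.sum_eq_zero
      intro K _
      rw [← Finset.mul_sum]
      rw [S18.piola hχ hψ hlr hrl x K]
      exact mul_zero _
    have hT1 : (∑ i, (∑ K, ((Matrix.of (S18.Jm ψ x)).det * S18.Jm χ (ψ x) i K) * R (ψ x) j K) * fderiv ℝ (fun y => Λ (ψ y) * α y) x (Pi.single i 1))
        = -(α x * ∑ K, R (ψ x) j K * fderiv ℝ β (ψ x) (Pi.single K 1)) := by
      have hstep : ∀ i : Fin d, (∑ K, ((Matrix.of (S18.Jm ψ x)).det * S18.Jm χ (ψ x) i K) * R (ψ x) j K) * fderiv ℝ (fun y => Λ (ψ y) * α y) x (Pi.single i 1)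
          = ∑ K, ∑ M, (-(Λ (ψ x) * α x)) * (R (ψ x) j K * fderiv ℝ β (ψ x) (Pi.single M 1) * (S18.Jm ψ x M i * ((Matrix.of (S18.Jm ψ x)).det * S18.Jm χ (ψ x) i K))) := by
        intro i
        rw [hDg i, Finset.sum_mul]
        apply Finset.sum_congr rfl
        intro K _
        calc ((Matrix.of (S18.Jm ψ x)).det * S18.Jm χ (ψ x) i K) * R (ψ x) j K * -((Λ (ψ x) * α x) * ∑ M, S18.Jm ψ x M i * fderiv ℝ β (ψ x) (Pi.single M 1))
            = ∑ M, (((Matrix.of (S18.Jm ψ x)).det * S18.Jm χ (ψ x) i K) * R (ψ x) j K * -((Λ (ψ x) * α x) * (S18.Jm ψ x M i * fderiv ℝ β (ψ x) (Pi.single M 1)))) := by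
              rw [Finset.mul_sum, ← Finset.sum_neg_distrib, Finset.mul_sum]
          _ = ∑ M, (-(Λ (ψ x) * α x)) * (R (ψ x) j K * fderiv ℝ β (ψ x) (Pi.single M 1) * (S18.Jm ψ x M i * ((Matrix.of (S18.Jm ψ x)).det * S18.Jm χ (ψ x) i K))) :=
              Finset.sum_congr rfl fun M _ => by ring
      calc (∑ i, (∑ K, ((Matrix.of (S18.Jm ψ x)).det * S18.Jm χ (ψ x) i K) * R (ψ x) j K) * fderiv ℝ (fun y => Λ (ψ y) * α y) x (Pi.single i 1))
          = ∑ i, ∑ K, ∑ M, (-(Λ (ψ x) * α x)) * (R (ψ x) j K * fderiv ℝ β (ψ x) (Pi.single M 1) * (S18.Jm ψ x M i * ((Matrix.of (S18.Jm ψ x)).det * S18.Jm χ (ψ x) i K))) :=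
            Finset.sum_congr rfl fun i _ => hstep i
        _ = ∑ K, ∑ M, (-(Λ (ψ x) * α x)) * (R (ψ x) j K * fderiv ℝ β (ψ x) (Pi.single M 1) * (∑ i, S18.Jm ψ x M i * ((Matrix.of (S18.Jm ψ x)).det * S18.Jm χ (ψ x) i K))) := by
            rw [Finset.sum_comm]
            apply Finset.sum_congr rfl
            intro K _
            rw [Finset.sum_comm]
            apply Finset.sum_congr rfl
            intro M _
            rw [Finset.mul_sum, Finset.mul_sum]
        _ = ∑ K, ∑ M, (-(Λ (ψ x) * α x)) * (R (ψ x) j K * fderiv ℝ β (ψ x) (Pi.single M 1) * ((Matrix.of (S18.Jm ψ x)).det * (if M = K then 1 else 0))) := by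
            apply Finset.sum_congr rfl
            intro K _
            apply Finset.sum_congr rfl
            intro M _
            rw [hPGx M K]
        _ = ∑ K, (-(Λ (ψ x) * α x)) * (R (ψ x) j K * fderiv ℝ β (ψ x) (Pi.single K 1) * (Matrix.of (S18.Jm ψ x)).det) := by
            apply Finset.sum_congr rfl
            intro K _
            rw [Finset.sum_eq_single K]
            · rw [if_pos rfl, mul_one]
            · intro M _ hMK
              rw [if_neg hMK, mul_zero, mul_zero, mul_zero]
            · intro h
              exact absurd (Finset.mem_univ K) h
        _ = -(α x * ∑ K, R (ψ x) j K * fderiv ℝ β (ψ x) (Pi.single K 1)) := by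
            rw [Finset.mul_sum, ← Finset.sum_neg_distrib]
            apply Finset.sum_congr rfl
            intro K _
            linear_combination (-(R (ψ x) j K * fderiv ℝ β (ψ x) (Pi.single K 1))) * hgJP
    have hT3 : (∑ i, ∑ K, (((Matrix.of (S18.Jm ψ x)).det * S18.Jm χ (ψ x) i K) * fderiv ℝ (fun y => R (ψ y) j K) x (Pi.single i 1)))
        = (Matrix.of (S18.Jm ψ x)).det * ∑ K, fderiv ℝ (fun Y => R Y j K) (ψ x) (Pi.single K 1) := by
      calc (∑ i, ∑ K, (((Matrix.of (S18.Jm ψ x)).det * S18.Jm χ (ψ x) i K) * fderiv ℝ (fun y => R (ψ y) j K) x (Pi.single i 1)))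
          = ∑ i, ∑ K, ∑ M, fderiv ℝ (fun Y => R Y j K) (ψ x) (Pi.single M 1) * (S18.Jm ψ x M i * ((Matrix.of (S18.Jm ψ x)).det * S18.Jm χ (ψ x) i K)) := by
            apply Finset.sum_congr rfl
            intro i _
            apply Finset.sum_congr rfl
            intro K _
            rw [hDrho K i, Finset.mul_sum]
            exact Finset.sum_congr rfl fun M _ => by ring
        _ = ∑ K, ∑ M, fderiv ℝ (fun Y => R Y j K) (ψ x) (Pi.single M 1) * (∑ i, S18.Jm ψ x M i * ((Matrix.of (S18.Jm ψ x)).det * S18.Jm χ (ψ x) i K)) := by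
            rw [Finset.sum_comm]
            apply Finset.sum_congr rfl
            intro K _
            rw [Finset.sum_comm]
            apply Finset.sum_congr rfl
            intro M _
            rw [Finset.mul_sum]
        _ = ∑ K, ∑ M, fderiv ℝ (fun Y => R Y j K) (ψ x) (Pi.single M 1) * ((Matrix.of (S18.Jm ψ x)).det * (if M = K then 1 else 0)) := by
            apply Finset.sum_congr rfl
            intro K _
            apply Finset.sum_congr rfl
            intro M _
            rw [hPGx M K]
        _ = ∑ K, fderiv ℝ (fun Y => R Y j K) (ψ x) (Pi.single K 1) * (Matrix.of (S18.Jm ψ x)).det := by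
            apply Finset.sum_congr rfl
            intro K _
            rw [Finset.sum_eq_single K]
            · rw [if_pos rfl, mul_one]
            · intro M _ hMK
              rw [if_neg hMK, mul_zero, mul_zero]
            · intro h
              exact absurd (Finset.mem_univ K) h
        _ = (Matrix.of (S18.Jm ψ x)).det * ∑ K, fderiv ℝ (fun Y => R Y j K) (ψ x) (Pi.single K 1) := by
            rw [Finset.mul_sum]
            exact Finset.sum_congr rfl fun K _ => by ring
    calc ∑ i, fderiv ℝ (fun y => Q y i j) x (Pi.single i 1)
        = (∑ i, (∑ K, ((Matrix.of (S18.Jm ψ x)).det * S18.Jm χ (ψ x) i K) * R (ψ x) j K) * fderiv ℝ (fun y => Λ (ψ y) * α y) x (Pi.single i 1))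
          + (Λ (ψ x) * α x) * (∑ i, ∑ K, (R (ψ x) j K * fderiv ℝ (fun y => (Matrix.of (S18.Jm ψ y)).det * S18.Jm χ (ψ y) i K) x (Pi.single i 1)))
          + (Λ (ψ x) * α x) * (∑ i, ∑ K, (((Matrix.of (S18.Jm ψ x)).det * S18.Jm χ (ψ x) i K) * fderiv ℝ (fun y => R (ψ y) j K) x (Pi.single i 1))) := by
          rw [Finset.sum_congr rfl (fun i _ => hDi i)]
          rw [Finset.sum_add_distrib, Finset.sum_add_distrib, ← Finset.mul_sum, ← Finset.mul_sum]
      _ = -(α x * ∑ K, R (ψ x) j K * fderiv ℝ β (ψ x) (Pi.single K 1)) + (Λ (ψ x) * α x) * 0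
          + (Λ (ψ x) * α x) * ((Matrix.of (S18.Jm ψ x)).det * ∑ K, fderiv ℝ (fun Y => R Y j K) (ψ x) (Pi.single K 1)) := by
          rw [hT1, hT2, hT3]
      _ = α x * ((∑ K, fderiv ℝ (fun Y => R Y j K) (ψ x) (Pi.single K 1))
          - ∑ K, R (ψ x) j K * fderiv ℝ β (ψ x) (Pi.single K 1)) := by
          rw [mul_zero, add_zero, ← mul_assoc, hgJP]
          ring

  have hRtR : ∀ X, (R X)ᵀ * R X = 1 := fun X => mul_eq_one_comm.mp (hR X)
  have hiff : (∀ x j, ∑ i, fderiv ℝ (fun y => Q y i j) x (Pi.single i 1) = 0) ↔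
      (∀ X K, fderiv ℝ β X (Pi.single K 1)
          = ∑ j, R X j K * ∑ M, fderiv ℝ (fun Y => R Y j M) X (Pi.single M 1)) := by
    constructor
    · intro hdiv X K
      have hAB : ∀ j, (∑ M, fderiv ℝ (fun Y => R Y j M) X (Pi.single M 1))
          = ∑ K', R X j K' * fderiv ℝ β X (Pi.single K' 1) := by
        intro j
        have h0 := hdiv (χ X) j
        rw [main (χ X) j, hlr X] at h0
        rcases mul_eq_zero.mp h0 with h | h
        · exact absurd h (hαne (χ X))
        · linarith [sub_eq_zero.mp h]
      calc fderiv ℝ β X (Pi.single K 1)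
          = ∑ K', (if K = K' then (1:ℝ) else 0) * fderiv ℝ β X (Pi.single K' 1) := by
            simp [Finset.sum_ite_eq]
        _ = ∑ K', (∑ j, R X j K * R X j K') * fderiv ℝ β X (Pi.single K' 1) := by
            apply Finset.sum_congr rfl
            intro K' _
            congr 1
            have h := congrArg (fun M : Matrix (Fin d) (Fin d) ℝ => M K K') (hRtR X)
            simpa [Matrix.mul_apply, Matrix.one_apply, Matrix.transpose_apply] using h.symm
        _ = ∑ j, R X j K * ∑ M, fderiv ℝ (fun Y => R Y j M) X (Pi.single M 1) := by
            simp_rw [Finset.sum_mul, hAB, Finset.mul_sum]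
            rw [Finset.sum_comm]
            exact Finset.sum_congr rfl fun a _ => Finset.sum_congr rfl fun b _ => by ring
    · intro hgrad x j
      rw [main x j]
      have hBA : ∑ K, R (ψ x) j K * fderiv ℝ β (ψ x) (Pi.single K 1)
          = ∑ K, fderiv ℝ (fun Y => R Y j K) (ψ x) (Pi.single K 1) := by
        calc ∑ K, R (ψ x) j K * fderiv ℝ β (ψ x) (Pi.single K 1)
            = ∑ K, R (ψ x) j K * ∑ l, R (ψ x) l K
                * ∑ M, fderiv ℝ (fun Y => R Y l M) (ψ x) (Pi.single M 1) := by
              apply Finset.sum_congr rfl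
              intro K _
              rw [hgrad (ψ x) K]
          _ = ∑ l, (∑ K, R (ψ x) j K * R (ψ x) l K)
                * ∑ M, fderiv ℝ (fun Y => R Y l M) (ψ x) (Pi.single M 1) := by
              rw [show (∑ K, R (ψ x) j K * ∑ l, R (ψ x) l K
                    * ∑ M, fderiv ℝ (fun Y => R Y l M) (ψ x) (Pi.single M 1))
                  = ∑ K, ∑ l, R (ψ x) j K * R (ψ x) l K
                    * ∑ M, fderiv ℝ (fun Y => R Y l M) (ψ x) (Pi.single M 1) from
                Finset.sum_congr rfl fun K _ => by
                  rw [Finset.mul_sum]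
                  exact Finset.sum_congr rfl fun l _ => by ring]
              rw [Finset.sum_comm]
              refine Finset.sum_congr rfl fun l _ => ?_
              rw [Finset.sum_mul]
          _ = ∑ l, (if j = l then (1:ℝ) else 0)
                * ∑ M, fderiv ℝ (fun Y => R Y l M) (ψ x) (Pi.single M 1) := by
              apply Finset.sum_congr rfl
              intro l _
              congr 1
              have h := congrArg (fun M : Matrix (Fin d) (Fin d) ℝ => M j l) (hR (ψ x))
              simpa [Matrix.mul_apply, Matrix.one_apply, Matrix.transpose_apply] using h
          _ = ∑ M, fderiv ℝ (fun Y => R Y j M) (ψ x) (Pi.single M 1) := by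
              simp [Finset.sum_ite_eq]
        -- note: goal α x * (A - B) with A written with index K; the last line gives sum over M
      rw [hBA]
      ring
  refine ⟨hiff, ?_⟩
  rintro ⟨R₀, hR₀⟩ c hc hαc
  apply hiff.mpr
  intro X K
  have hβc : β = fun _ => -Real.log c := by
    funext Y
    rw [hβ Y, hαc (χ Y), hlr Y]
    have hcc : Λ Y * (c / Λ Y) = c := by
      rw [mul_comm]; exact div_mul_cancel₀ c (hΛne Y)
    rw [hcc]
  have h1 : fderiv ℝ β X (Pi.single K 1) = 0 := by
    rw [hβc, fderiv_fun_const]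
    rfl
  have h2 : ∀ j M, fderiv ℝ (fun Y => R Y j M) X (Pi.single M 1) = 0 := by
    intro j M
    have : (fun Y => R Y j M) = fun _ => R₀ j M := funext fun Y => by rw [hR₀ Y]
    rw [this, fderiv_fun_const]
    rfl
  rw [h1]
  rw [Finset.sum_congr rfl (fun j _ => by rw [Finset.sum_congr rfl (fun M _ => h2 j M)])]
  simp
end

section
/- For a rotation field R = I + sin θ · S + (1 − cos θ) S², where S = axt(a) is the skew matrix of a C¹ unit-vector field a and θ is a C¹ scalar field, if a is constant then Rᵗ Div Rᵗ = a × ∇θ; consequently, for constant axis a, the integrability condition Curl(Rᵗ Div Rᵗ) = 0 reduces to a ∇²θ − (a·∇)∇θ − (∇·a)∇θ + (∇θ·∇)a = 0, which for planar dependence θ = θ̂(X⊥) with X⊥·a = 0 is equivalent to the harmonicity ∇²θ̂ = 0. -/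
open Matrix

/-- Curl of a vector field on ℝ³ (components via partial derivatives). -/
noncomputable def pcurl (v : (Fin 3 → ℝ) → (Fin 3 → ℝ)) (X : Fin 3 → ℝ) : Fin 3 → ℝ :=
  ![fderiv ℝ (fun Y => v Y 2) X (Pi.single 1 1) - fderiv ℝ (fun Y => v Y 1) X (Pi.single 2 1),
    fderiv ℝ (fun Y => v Y 0) X (Pi.single 2 1) - fderiv ℝ (fun Y => v Y 2) X (Pi.single 0 1),
    fderiv ℝ (fun Y => v Y 1) X (Pi.single 0 1) - fderiv ℝ (fun Y => v Y 0) X (Pi.single 1 1)]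

set_option maxHeartbeats 1000000

/-- For the Euler–Rodrigues rotation field R = I + sin θ S + (1−cos θ)S² with
constant unit axis a: (i) Rᵗ Div Rᵗ = a × ∇θ; (ii) the curl of a × ∇θ is
a ∇²θ − (a·∇)∇θ (the reduced integrability condition, since ∇·a = 0 and
(∇θ·∇)a = 0 for constant a); (iii) for planar dependence (∇θ·a ≡ 0) the
integrability condition Curl(Rᵗ Div Rᵗ) = 0 is equivalent to harmonicity
∇²θ = 0. -/
theorem stmt_19 (a : Fin 3 → ℝ) (ha : a ⬝ᵥ a = 1)
    (θ : (Fin 3 → ℝ) → ℝ) (hθ : ContDiff ℝ 2 θ)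
    (S : Matrix (Fin 3) (Fin 3) ℝ)
    (hS : S = !![0, -a 2, a 1; a 2, 0, -a 0; -a 1, a 0, 0])
    (R : (Fin 3 → ℝ) → Matrix (Fin 3) (Fin 3) ℝ)
    (hR : ∀ X, R X = 1 + Real.sin (θ X) • S + (1 - Real.cos (θ X)) • (S * S))
    (gradθ : (Fin 3 → ℝ) → Fin 3 → ℝ)
    (hgrad : ∀ X K, gradθ X K = fderiv ℝ θ X (Pi.single K 1)) :
    (∀ X K, ∑ j, R X j K * ∑ M, fderiv ℝ (fun Y => R Y j M) X (Pi.single M 1)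
        = crossProduct a (gradθ X) K) ∧
    (∀ X K, pcurl (fun Y => crossProduct a (gradθ Y)) X K
        = a K * (∑ I, fderiv ℝ (fun Y => gradθ Y I) X (Pi.single I 1))
          - fderiv ℝ (fun Y => gradθ Y K) X a) ∧
    ((∀ X, fderiv ℝ θ X a = 0) →
      ((∀ X, pcurl (fun Y => crossProduct a (gradθ Y)) X = 0) ↔
        (∀ X, ∑ I, fderiv ℝ (fun Y => gradθ Y I) X (Pi.single I 1) = 0))) := by
  have hθ1 : Differentiable ℝ θ := hθ.differentiable (by norm_num)
  have hfd : ContDiff ℝ 1 (fderiv ℝ θ) := hθ.fderiv_right (by norm_num)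
  have hfd1 : Differentiable ℝ (fderiv ℝ θ) := hfd.differentiable (by norm_num)
  have ha' : a 0 * a 0 + a 1 * a 1 + a 2 * a 2 = 1 := by
    simpa [dotProduct, Fin.sum_univ_three] using ha
  -- derivative of the entries of R
  have hRder : ∀ (j M : Fin 3) (X v : Fin 3 → ℝ),
      fderiv ℝ (fun Y => R Y j M) X v
        = (Real.cos (θ X) * S j M + Real.sin (θ X) * (S * S) j M) * fderiv ℝ θ X v := by
    intro j M X v
    have hfun : (fun Y => R Y j M)
        = fun Y => (1 : Matrix (Fin 3) (Fin 3) ℝ) j M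
            + (Real.sin (θ Y) * S j M + (1 - Real.cos (θ Y)) * (S * S) j M) := by
      funext Y
      rw [hR]
      simp [Matrix.add_apply, Matrix.smul_apply, smul_eq_mul]
      ring
    have hd : HasFDerivAt θ (fderiv ℝ θ X) X := (hθ1 X).hasFDerivAt
    have key : HasFDerivAt (fun Y => R Y j M)
        ((Real.cos (θ X) * S j M + Real.sin (θ X) * (S * S) j M) • (fderiv ℝ θ X)) X := by
      rw [hfun]
      have h1 := hd.sin.mul_const (S j M)
      have h2 := (hd.cos.const_sub 1).mul_const ((S * S) j M)
      have h3 := (h1.add h2).const_add ((1 : Matrix (Fin 3) (Fin 3) ℝ) j M)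
      refine HasFDerivAt.congr_fderiv h3 ?_
      ext w
      simp [smul_eq_mul]
      ring
    rw [key.fderiv]
    simp [smul_eq_mul]
  have hgfun : ∀ K : Fin 3, (fun Y => gradθ Y K) = fun Y => fderiv ℝ θ Y (Pi.single K 1) := by
    intro K; funext Y; exact hgrad Y K
  have hdg : ∀ (w : Fin 3 → ℝ), Differentiable ℝ (fun Y => fderiv ℝ θ Y w) :=
    fun w => hfd1.clm_apply (differentiable_const w)
  have heval : ∀ (X w v : Fin 3 → ℝ),
      fderiv ℝ (fun Y => fderiv ℝ θ Y w) X v = fderiv ℝ (fderiv ℝ θ) X v w := by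
    intro X w v
    rw [fderiv_clm_apply (hfd1 X) (differentiableAt_const w)]
    simp
  -- part (i)
  have part1 : ∀ X K, ∑ j, R X j K * ∑ M, fderiv ℝ (fun Y => R Y j M) X (Pi.single M 1)
      = crossProduct a (gradθ X) K := by
    intro X K
    have hgv : ∀ M : Fin 3, fderiv ℝ θ X (Pi.single M 1) = gradθ X M :=
      fun M => (hgrad X M).symm
    have pyth : Real.sin (θ X) ^ 2 + Real.cos (θ X) ^ 2 = 1 := Real.sin_sq_add_cos_sq (θ X)
    simp only [hRder, hgv, Fin.sum_univ_three]
    simp only [hR, hS]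
    fin_cases K
    · simp [crossProduct, Matrix.add_apply, Matrix.smul_apply, Matrix.one_apply,
        Matrix.mul_apply, Fin.sum_univ_three, smul_eq_mul]
      linear_combination ((a 2)*(gradθ X 1)*(Real.cos (θ X)) + (-1)*(a 2)*(gradθ X 1)*(Real.cos (θ X))*(Real.cos (θ X)) + (-1)*(a 2)*(gradθ X 1)*(Real.sin (θ X))*(Real.sin (θ X)) + (a 2)*(a 2)*(gradθ X 0)*(Real.sin (θ X)) + (-1)*(a 2)*(a 2)*(gradθ X 0)*(Real.sin (θ X))*(Real.cos (θ X)) + (-1)*(a 1)*(gradθ X 2)*(Real.cos (θ X)) + (a 1)*(gradθ X 2)*(Real.cos (θ X))*(Real.cos (θ X)) + (a 1)*(gradθ X 2)*(Real.sin (θ X))*(Real.sin (θ X)) + (a 1)*(a 1)*(gradθ X 0)*(Real.sin (θ X)) + (-1)*(a 1)*(a 1)*(gradθ X 0)*(Real.sin (θ X))*(Real.cos (θ X)) + (-1)*(a 0)*(a 2)*(gradθ X 2)*(Real.sin (θ X)) + (a 0)*(a 2)*(gradθ X 2)*(Real.sin (θ X))*(Real.cos (θ X)) + (-1)*(a 0)*(a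 1)*(gradθ X 1)*(Real.sin (θ X)) + (a 0)*(a 1)*(gradθ X 1)*(Real.sin (θ X))*(Real.cos (θ X))) * ha' + ((-1)*(a 2)*(gradθ X 1) + (a 1)*(gradθ X 2)) * pyth
    · simp [crossProduct, Matrix.add_apply, Matrix.smul_apply, Matrix.one_apply,
        Matrix.mul_apply, Fin.sum_univ_three, smul_eq_mul]
      linear_combination ((-1)*(a 2)*(gradθ X 0)*(Real.cos (θ X)) + (a 2)*(gradθ X 0)*(Real.cos (θ X))*(Real.cos (θ X)) + (a 2)*(gradθ X 0)*(Real.sin (θ X))*(Real.sin (θ X)) + (a 2)*(a 2)*(gradθ X 1)*(Real.sin (θ X)) + (-1)*(a 2)*(a 2)*(gradθ X 1)*(Real.sin (θ X))*(Real.cos (θ X)) + (-1)*(a 1)*(a 2)*(gradθ X 2)*(Real.sin (θ X)) + (a 1)*(a 2)*(gradθ X 2)*(Real.sin (θ X))*(Real.cos (θ X)) + (a 0)*(gradθ X 2)*(Real.cos (θ X)) + (-1)*(a 0)*(gradθ X 2)*(Real.cos (θ X))*(Real.cos (θ X)) + (-1)*(a 0)*(gradθ X 2)*(Real.sin (θ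 X))*(Real.sin (θ X)) + (-1)*(a 0)*(a 1)*(gradθ X 0)*(Real.sin (θ X)) + (a 0)*(a 1)*(gradθ X 0)*(Real.sin (θ X))*(Real.cos (θ X)) + (a 0)*(a 0)*(gradθ X 1)*(Real.sin (θ X)) + (-1)*(a 0)*(a 0)*(gradθ X 1)*(Real.sin (θ X))*(Real.cos (θ X))) * ha' + ((a 2)*(gradθ X 0) + (-1)*(a 0)*(gradθ X 2)) * pyth
    · simp [crossProduct, Matrix.add_apply, Matrix.smul_apply, Matrix.one_apply,
        Matrix.mul_apply, Fin.sum_univ_three, smul_eq_mul]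
      linear_combination ((a 1)*(gradθ X 0)*(Real.cos (θ X)) + (-1)*(a 1)*(gradθ X 0)*(Real.cos (θ X))*(Real.cos (θ X)) + (-1)*(a 1)*(gradθ X 0)*(Real.sin (θ X))*(Real.sin (θ X)) + (-1)*(a 1)*(a 2)*(gradθ X 1)*(Real.sin (θ X)) + (a 1)*(a 2)*(gradθ X 1)*(Real.sin (θ X))*(Real.cos (θ X)) + (a 1)*(a 1)*(gradθ X 2)*(Real.sin (θ X)) + (-1)*(a 1)*(a 1)*(gradθ X 2)*(Real.sin (θ X))*(Real.cos (θ X)) + (-1)*(a 0)*(gradθ X 1)*(Real.cos (θ X)) + (a 0)*(gradθ X 1)*(Real.cos (θ X))*(Real.cos (θ X)) + (a 0)*(gradθ X 1)*(Real.sin (θ X))*(Real.sin (θ X)) + (-1)*(a 0)*(a 2)*(gradθ X 0)*(Real.sin (θ X)) + (a 0)*(a 2)*(gradθ X 0)*(Real.sin (θ X))*(Real.cos (θ X)) + (a 0)*(a 0)*(gradθ X 2)*(Real.sin (θ X)) + (-1)*(a 0)*(a 0)*(gradθ X 2)*(Real.sin (θ X))*(Real.cos (θ X))) * ha' + ((-1)*(a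 1)*(gradθ X 0) + (a 0)*(gradθ X 1)) * pyth
  -- derivative of (a p * g_I - a q * g_J)
  have hdiff2 : ∀ (p q I J : Fin 3) (X v : Fin 3 → ℝ),
      fderiv ℝ (fun Y => a p * fderiv ℝ θ Y (Pi.single I 1)
                        - a q * fderiv ℝ θ Y (Pi.single J 1)) X v
      = a p * fderiv ℝ (fun Y => fderiv ℝ θ Y (Pi.single I 1)) X v
        - a q * fderiv ℝ (fun Y => fderiv ℝ θ Y (Pi.single J 1)) X v := by
    intro p q I J X v
    have H := (((hdg (Pi.single I 1)) X).hasFDerivAt.const_mul (a p)).sub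
      (((hdg (Pi.single J 1)) X).hasFDerivAt.const_mul (a q))
    rw [HasFDerivAt.fderiv (f := fun Y => a p * fderiv ℝ θ Y (Pi.single I 1)
                          - a q * fderiv ℝ θ Y (Pi.single J 1)) H]
    simp [smul_eq_mul]
  have hax : a = a 0 • (Pi.single 0 1 : Fin 3 → ℝ) + a 1 • (Pi.single 1 1 : Fin 3 → ℝ) + a 2 • (Pi.single 2 1 : Fin 3 → ℝ) := by
    funext i; fin_cases i <;> simp
  have hmap : ∀ (X : Fin 3 → ℝ) (K : Fin 3),
      fderiv ℝ (fun Y => fderiv ℝ θ Y (Pi.single K 1)) X a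
        = a 0 * fderiv ℝ (fun Y => fderiv ℝ θ Y (Pi.single K 1)) X (Pi.single 0 1)
        + a 1 * fderiv ℝ (fun Y => fderiv ℝ θ Y (Pi.single K 1)) X (Pi.single 1 1)
        + a 2 * fderiv ℝ (fun Y => fderiv ℝ θ Y (Pi.single K 1)) X (Pi.single 2 1) := by
    intro X K
    conv_lhs => rw [hax]
    rw [map_add, map_add, _root_.map_smul, _root_.map_smul, _root_.map_smul]
    simp [smul_eq_mul]
  -- cross product components
  have hc0 : (fun Y => crossProduct a (gradθ Y) 0)
      = fun Y => a 1 * fderiv ℝ θ Y (Pi.single 2 1) - a 2 * fderiv ℝ θ Y (Pi.single 1 1) := by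
    funext Y; simp [crossProduct, hgrad]
  have hc1 : (fun Y => crossProduct a (gradθ Y) 1)
      = fun Y => a 2 * fderiv ℝ θ Y (Pi.single 0 1) - a 0 * fderiv ℝ θ Y (Pi.single 2 1) := by
    funext Y; simp [crossProduct, hgrad]
  have hc2 : (fun Y => crossProduct a (gradθ Y) 2)
      = fun Y => a 0 * fderiv ℝ θ Y (Pi.single 1 1) - a 1 * fderiv ℝ θ Y (Pi.single 0 1) := by
    funext Y; simp [crossProduct, hgrad]
  -- part (ii)
  have part2 : ∀ X K, pcurl (fun Y => crossProduct a (gradθ Y)) X K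
      = a K * (∑ I, fderiv ℝ (fun Y => gradθ Y I) X (Pi.single I 1))
        - fderiv ℝ (fun Y => gradθ Y K) X a := by
    intro X K
    fin_cases K <;>
      simp [pcurl, hgfun, Fin.sum_univ_three, hc0, hc1, hc2, hdiff2, hmap] <;>
      ring
  -- part (iii)
  have part3 : (∀ X, fderiv ℝ θ X a = 0) →
      ((∀ X, pcurl (fun Y => crossProduct a (gradθ Y)) X = 0) ↔
        (∀ X, ∑ I, fderiv ℝ (fun Y => gradθ Y I) X (Pi.single I 1) = 0)) := by
    intro hplane
    have hsec0 : ∀ (X : Fin 3 → ℝ) (K : Fin 3), fderiv ℝ (fun Y => gradθ Y K) X a = 0 := by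
      intro X K
      rw [hgfun, heval]
      have hsymm := second_derivative_symmetric (f := θ) (fun y => (hθ1 y).hasFDerivAt)
        ((hfd1 X).hasFDerivAt) a (Pi.single K 1)
      rw [hsymm, ← heval]
      have hz : (fun Y => fderiv ℝ θ Y a) = fun _ => (0 : ℝ) := funext hplane
      rw [hz]
      simp
    constructor
    · intro hc X
      obtain ⟨K, hK⟩ : ∃ K, a K ≠ 0 := by
        by_contra h
        push_neg at h
        rw [h 0, h 1, h 2] at ha'
        norm_num at ha'
      have hKX := congrFun (hc X) K
      rw [part2 X K, hsec0 X K] at hKX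
      simp only [Pi.zero_apply, sub_zero] at hKX
      exact (mul_eq_zero.mp hKX).resolve_left hK
    · intro hΔ X
      funext K
      rw [part2 X K, hsec0 X K, hΔ X]
      simp
  exact ⟨part1, part2, part3⟩
end
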